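/- arXiv:1904.12207 — 10 statements merged into one kernel-verified Lean document; each statement's English description precedes it below -/
import Mathlib

section
/- Let H be a complex Hilbert space and let R₀, R₁ : H →L[ℂ] H be self-adjoint operators satisfying R₀ ∘ R₁ = R₁ ∘ R₀ and R₀ ∘ R₀ + R₁ ∘ R₁ = id. Then the Neumark dilation operator U on the Hilbert space direct sum K = H ⊕ H (the L²-product WithLp 2 (H × H)), defined by U(x, y) = (R₀ x + R₁ y, R₁ x − R₀ y), is self-adjoint and satisfies U ∘ U = id; in particular U is unitary. -/
open scoped InnerProductSpace

/-- **Neumark dilation unitary.** If `R₀, R₁` are commuting self-adjoint operators on a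
complex Hilbert space `H` with `R₀² + R₁² = 1`, then the operator `U` on the Hilbert space
direct sum `K = H ⊕ H` (the `L²`-product `WithLp 2 (H × H)`) defined by
`U (x, y) = (R₀ x + R₁ y, R₁ x - R₀ y)` is self-adjoint and satisfies `U ∘ U = 1`;
in particular `U` is unitary. -/
theorem neumark_dilation_unitary
    {H : Type*} [NormedAddCommGroup H] [InnerProductSpace ℂ H] [CompleteSpace H]
    (R₀ R₁ : H →L[ℂ] H)
    (hR₀ : IsSelfAdjoint R₀) (hR₁ : IsSelfAdjoint R₁)
    (hcomm : R₀ ∘L R₁ = R₁ ∘L R₀)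
    (hsum : R₀ ∘L R₀ + R₁ ∘L R₁ = 1)
    (U : WithLp 2 (H × H) →L[ℂ] WithLp 2 (H × H))
    (hU : ∀ x y : H,
      U ((WithLp.equiv 2 (H × H)).symm (x, y)) =
        (WithLp.equiv 2 (H × H)).symm (R₀ x + R₁ y, R₁ x - R₀ y)) :
    IsSelfAdjoint U ∧ U ∘L U = 1 ∧
      ContinuousLinearMap.adjoint U ∘L U = 1 ∧ U ∘L ContinuousLinearMap.adjoint U = 1 := by
  have hU' : ∀ v : WithLp 2 (H × H),
      U v = (WithLp.equiv 2 (H × H)).symm (R₀ v.ofLp.1 + R₁ v.ofLp.2, R₁ v.ofLp.1 - R₀ v.ofLp.2) := by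
    intro v
    have := hU v.ofLp.1 v.ofLp.2
    simpa only [WithLp.equiv_symm_apply, Prod.mk.eta, WithLp.toLp_ofLp] using this
  have hcomm' : ∀ x : H, R₀ (R₁ x) = R₁ (R₀ x) := fun x =>
    congrFun (congrArg DFunLike.coe hcomm) x
  have hsum' : ∀ x : H, R₀ (R₀ x) + R₁ (R₁ x) = x := fun x =>
    congrFun (congrArg DFunLike.coe hsum) x
  have hUU : U ∘L U = 1 := by
    ext v
    rw [ContinuousLinearMap.comp_apply, hU' v, hU']
    apply (WithLp.equiv 2 (H × H)).injective
    ext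
    · simp only [Equiv.apply_symm_apply, WithLp.equiv_symm_apply, WithLp.equiv_apply, WithLp.ofLp_toLp]
      simp only [map_add, map_sub]
      have := hsum' v.fst
      have h2 := hcomm' v.snd
      simp [ContinuousLinearMap.one_apply]
      rw [h2] at *
      abel_nf
      linear_combination (norm := abel) this
    · simp only [Equiv.apply_symm_apply, WithLp.equiv_symm_apply, WithLp.equiv_apply, WithLp.ofLp_toLp]
      simp only [map_add, map_sub]
      have := hsum' v.snd
      have h2 := hcomm' v.fst
      simp [ContinuousLinearMap.one_apply]
      rw [h2] at *
      linear_combination (norm := abel) this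
  have hsa : IsSelfAdjoint U := by
    rw [ContinuousLinearMap.isSelfAdjoint_iff_isSymmetric]
    intro v w
    simp only [ContinuousLinearMap.coe_coe]
    rw [hU' v, hU' w]
    simp only [WithLp.prod_inner_apply, WithLp.equiv_symm_apply, WithLp.ofLp_toLp,
      inner_add_left, inner_add_right, inner_sub_left, inner_sub_right]
    have h0 := ContinuousLinearMap.isSelfAdjoint_iff_isSymmetric.mp hR₀
    have h1 := ContinuousLinearMap.isSelfAdjoint_iff_isSymmetric.mp hR₁
    simp only [LinearMap.IsSymmetric, ContinuousLinearMap.coe_coe] at h0 h1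
    rw [h0 v.ofLp.1 w.ofLp.1, h0 v.ofLp.2 w.ofLp.2, h1 v.ofLp.1 w.ofLp.2, h1 v.ofLp.2 w.ofLp.1]
    ring
  refine ⟨hsa, hUU, ?_, ?_⟩ <;> rw [hsa.adjoint_eq] <;> exact hUU
end

section
/- Let H be a complex Hilbert space, R₀, R₁ : H →L[ℂ] H self-adjoint with R₀ ∘ R₁ = R₁ ∘ R₀ and R₀² + R₁² = id, and let U(x, y) = (R₀ x + R₁ y, R₁ x − R₀ y) on K = H ⊕ H. Let P₀ : K →L[ℂ] K be the orthogonal projection P₀(x, y) = (x, 0) onto the first summand, and define Q̂₀ = U ∘ P₀ ∘ U. Then Q̂₀ is a self-adjoint idempotent (an orthogonal projection on K), and for every ψ ∈ H, ⟪(ψ, 0), Q̂₀ (ψ, 0)⟫ = ⟪ψ, R₀(R₀ ψ)⟫, i.e. the projective measurement Q̂₀ on the dilated space reproduces the statistics of the POVM element Q₀ = R₀² on states of the form ψ ⊗ |0⟩. -/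
open scoped InnerProductSpace

/-- **Neumark dilation produces a projective measurement reproducing the POVM statistics.**
With `U (x, y) = (R₀ x + R₁ y, R₁ x - R₀ y)` on `K = H ⊕ H` and `P₀ (x, y) = (x, 0)` the
orthogonal projection onto the first summand, the operator `Q̂₀ = U ∘ P₀ ∘ U` is a
self-adjoint idempotent (an orthogonal projection on `K`), and for every `ψ ∈ H`,
`⟪(ψ,0), Q̂₀ (ψ,0)⟫ = ⟪ψ, R₀ (R₀ ψ)⟫`. -/
theorem neumark_dilation_projective_measurement
    {H : Type*} [NormedAddCommGroup H] [InnerProductSpace ℂ H] [CompleteSpace H]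
    (R₀ R₁ : H →L[ℂ] H)
    (hR₀ : IsSelfAdjoint R₀) (hR₁ : IsSelfAdjoint R₁)
    (hcomm : R₀ ∘L R₁ = R₁ ∘L R₀)
    (hsum : R₀ ∘L R₀ + R₁ ∘L R₁ = 1)
    (U : WithLp 2 (H × H) →L[ℂ] WithLp 2 (H × H))
    (hU : ∀ x y : H,
      U ((WithLp.equiv 2 (H × H)).symm (x, y)) =
        (WithLp.equiv 2 (H × H)).symm (R₀ x + R₁ y, R₁ x - R₀ y))
    (P₀ : WithLp 2 (H × H) →L[ℂ] WithLp 2 (H × H))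
    (hP₀ : ∀ x y : H,
      P₀ ((WithLp.equiv 2 (H × H)).symm (x, y)) = (WithLp.equiv 2 (H × H)).symm (x, 0)) :
    IsSelfAdjoint (U ∘L P₀ ∘L U) ∧
      (U ∘L P₀ ∘L U) ∘L (U ∘L P₀ ∘L U) = U ∘L P₀ ∘L U ∧
      ∀ ψ : H,
        ⟪(WithLp.equiv 2 (H × H)).symm (ψ, 0),
            (U ∘L P₀ ∘L U) ((WithLp.equiv 2 (H × H)).symm (ψ, 0))⟫_ℂ =
          ⟪ψ, R₀ (R₀ ψ)⟫_ℂ := by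
  set e := WithLp.equiv 2 (H × H) with he
  have key : ∀ k : WithLp 2 (H × H), k = e.symm (e k) := fun k => rfl
  have hcomm' : ∀ x, R₀ (R₁ x) = R₁ (R₀ x) := fun x => ContinuousLinearMap.ext_iff.mp hcomm x
  have hsum' : ∀ x : H, R₀ (R₀ x) + R₁ (R₁ x) = x := fun x => by simpa using ContinuousLinearMap.ext_iff.mp hsum x
  -- U is an involution
  have hUU : ∀ k : WithLp 2 (H × H), U (U k) = k := by
    intro k
    rw [key k, hU, hU]
    apply congrArg
    ext
    · show R₀ (R₀ (e k).1 + R₁ (e k).2) + R₁ (R₁ (e k).1 - R₀ (e k).2) = (e k).1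
      rw [map_add, map_sub, hcomm' (e k).2]
      conv_rhs => rw [← hsum' (e k).1]
      abel
    · show R₁ (R₀ (e k).1 + R₁ (e k).2) - R₀ (R₁ (e k).1 - R₀ (e k).2) = (e k).2
      rw [map_add, map_sub, hcomm' (e k).1]
      conv_rhs => rw [← hsum' (e k).2]
      abel
  -- symmetry of U
  have hUsymm : ∀ a b : WithLp 2 (H × H), ⟪U a, b⟫_ℂ = ⟪a, U b⟫_ℂ := by
    intro a b
    have h0 : ∀ x y : H, ⟪R₀ x, y⟫_ℂ = ⟪x, R₀ y⟫_ℂ := fun x y => hR₀.isSymmetric x y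
    have h1 : ∀ x y : H, ⟪R₁ x, y⟫_ℂ = ⟪x, R₁ y⟫_ℂ := fun x y => hR₁.isSymmetric x y
    rw [key a, key b, hU, hU, WithLp.prod_inner_apply, WithLp.prod_inner_apply]
    simp only [he, WithLp.equiv_symm_apply, WithLp.ofLp_toLp, inner_add_left, inner_add_right,
      inner_sub_left, inner_sub_right, h0, h1]
    ring
  have hPsymm : ∀ a b : WithLp 2 (H × H), ⟪P₀ a, b⟫_ℂ = ⟪a, P₀ b⟫_ℂ := by
    intro a b
    rw [key a, key b, hP₀, hP₀, WithLp.prod_inner_apply, WithLp.prod_inner_apply]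
    simp [he, WithLp.equiv_symm_apply, WithLp.ofLp_toLp]
  have hUsa : IsSelfAdjoint U :=
    ContinuousLinearMap.isSelfAdjoint_iff_isSymmetric.mpr hUsymm
  have hPsa : IsSelfAdjoint P₀ :=
    ContinuousLinearMap.isSelfAdjoint_iff_isSymmetric.mpr hPsymm
  have hPP : ∀ k, P₀ (P₀ k) = P₀ k := by
    intro k
    rw [key k, hP₀, hP₀]
  refine ⟨?_, ?_, ?_⟩
  · have : star (U ∘L P₀ ∘L U) = U ∘L P₀ ∘L U := by
      show star (U * (P₀ * U)) = _
      rw [star_mul, star_mul, hUsa.star_eq, hPsa.star_eq]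
      show (U ∘L P₀) ∘L U = _
      rw [ContinuousLinearMap.comp_assoc]
    exact this
  · ext k
    simp only [ContinuousLinearMap.comp_apply, hUU, hPP]
  · intro ψ
    rw [ContinuousLinearMap.comp_apply, ContinuousLinearMap.comp_apply, hU, hP₀]
    simp only [map_zero, add_zero, sub_zero]
    rw [hU, WithLp.prod_inner_apply]
    simp [he, WithLp.equiv_symm_apply, WithLp.ofLp_toLp]
end

section
/- Under the exact ideal-expectation setup for the six parity operators, the operators corresponding to adjacent edges anti-commute in their action on Ψ: for every adjacent pair (A_r, A_s) among (A₁₂,A₁₆), (A₁₂,A₂₃), (A₂₃,A₃₄), (A₃₄,A₄₅), (A₄₅,A₅₆), (A₅₆,A₁₆), one has A_r(A_s Ψ) + A_s(A_r Ψ) = 0. -/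
/-!
Write `u = A₁₂ Ψ`, `v = A₃₄ Ψ`, `w = A₅₆ Ψ`. The column relations give `A₄₅ Ψ = u`, `A₁₆ Ψ = v`,
`A₂₃ Ψ = -w`, and the row relations say that any two operators of a row send `Ψ` to the image of
`Ψ` under the third. For operators `P`, `Q` in different rows and columns, `P (Q Ψ)` and
`Q (P Ψ)` are therefore both `±` the image of `Ψ` under the remaining column, with opposite signs
because the product of the three column signs is `-1` while both row signs are `+1`.
-/

namespace ContinuousLinearMap

variable {R E : Type*} [Semiring R] [TopologicalSpace E] [AddCommMonoid E] [Module R E]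

theorem involutive_of_comp_self_eq_one {A : E →L[R] E} (h : A ∘L A = 1) :
    Function.Involutive A :=
  fun x => DFunLike.congr_fun h x

theorem commute_of_comp_eq_comp {A B : E →L[R] E} (h : A ∘L B = B ∘L A) :
    Function.Commute A B :=
  fun x => DFunLike.congr_fun h x

end ContinuousLinearMap

section MagicSquare

variable {α : Type*} {X Y Z : α → α} {v : α}

theorem apply_apply_eq_of_apply_apply_apply_eq_self (hX : Function.Involutive X)
    (hY : Function.Involutive Y) (hXY : Function.Commute X Y) (hYZ : Function.Commute Y Z)
    (hXZ : Function.Commute X Z) (h : X (Y (Z v)) = v) :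
    X (Y v) = Z v ∧ Y (X v) = Z v ∧ X (Z v) = Y v ∧ Z (X v) = Y v ∧
      Y (Z v) = X v ∧ Z (Y v) = X v := by
  have hYZv : Y (Z v) = X v := hX.eq_iff.mp h
  have hZv : Z v = Y (X v) := hY.eq_iff.mp hYZv
  have hXZv : X (Z v) = Y v :=
    calc X (Z v) = X (Y (Y (Z v))) := by rw [hY]
      _ = Y (X (Y (Z v))) := hXY _
      _ = Y v := by rw [h]
  refine ⟨?_, hZv.symm, hXZv, ?_, hYZv, ?_⟩
  · rw [hXY, hZv]
  · rw [← hXZ, hXZv]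
  · rw [← hYZ, hYZv]

variable {E F : Type*} [AddCommGroup E] [FunLike F E E] [AddMonoidHomClass F E E]

theorem map_units_int_smul (f : F) (ε : ℤˣ) (x : E) : f (ε • x) = ε • f x := by
  rw [Units.smul_def, Units.smul_def, map_zsmul]

theorem apply_eq_smul_apply_of_apply_apply_eq_smul {A B : F} {ψ : E}
    (hA : Function.Involutive A) {ε : ℤˣ} (h : A (B ψ) = ε • ψ) : B ψ = ε • A ψ := by
  rw [hA.eq_iff.mp h, map_units_int_smul]

theorem apply_add_apply_eq_zero_of_sign_square {X₁ X₂ X₃ Y₁ Y₂ Y₃ : F} {ψ : E}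
    {ε₁ ε₂ ε₃ : ℤˣ} (hrow₁ : X₁ (X₂ ψ) = X₃ ψ) (hrow₂ : Y₂ (Y₁ ψ) = Y₃ ψ)
    (hcol₁ : Y₁ ψ = ε₁ • X₁ ψ) (hcol₂ : Y₂ ψ = ε₂ • X₂ ψ) (hcol₃ : Y₃ ψ = ε₃ • X₃ ψ)
    (hε : ε₁ * ε₂ * ε₃ = -1) :
    X₁ (Y₂ ψ) + Y₂ (X₁ ψ) = 0 := by
  have hX₁ : X₁ ψ = ε₁ • Y₁ ψ := by rw [hcol₁, smul_smul, Int.units_mul_self, one_smul]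
  have hsign : ε₁ * ε₃ = -ε₂ := by
    calc ε₁ * ε₃ = ε₁ * ε₂ * ε₃ * ε₂ := by
          rw [mul_right_comm ε₁, mul_assoc, Int.units_mul_self, mul_one]
      _ = -ε₂ := by rw [hε, neg_one_mul]
  have hX₁Y₂ : X₁ (Y₂ ψ) = ε₂ • X₃ ψ := by rw [hcol₂, map_units_int_smul, hrow₁]
  have hY₂X₁ : Y₂ (X₁ ψ) = -ε₂ • X₃ ψ := by
    rw [hX₁, map_units_int_smul, hrow₂, hcol₃, smul_smul, hsign]
  rw [hX₁Y₂, hY₂X₁, Units.neg_smul, add_neg_cancel]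

end MagicSquare

open ContinuousLinearMap (involutive_of_comp_self_eq_one commute_of_comp_eq_comp)

theorem adjacent_parities_anticommute_on_state_general
    {H : Type*} [NormedAddCommGroup H] [InnerProductSpace ℂ H]
    (A₁₂ A₃₄ A₅₆ A₄₅ A₁₆ A₂₃ : H →L[ℂ] H)
    -- Hermitian involutions
    (hi₁₂ : A₁₂ ∘L A₁₂ = 1) (hi₃₄ : A₃₄ ∘L A₃₄ = 1) (hi₅₆ : A₅₆ ∘L A₅₆ = 1)
    (hi₄₅ : A₄₅ ∘L A₄₅ = 1) (hi₁₆ : A₁₆ ∘L A₁₆ = 1)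
    -- the nine same-row/same-column commutation relations
    (c₁ : A₁₂ ∘L A₃₄ = A₃₄ ∘L A₁₂) (c₂ : A₁₂ ∘L A₅₆ = A₅₆ ∘L A₁₂)
    (c₃ : A₃₄ ∘L A₅₆ = A₅₆ ∘L A₃₄) (c₄ : A₄₅ ∘L A₁₆ = A₁₆ ∘L A₄₅)
    (c₅ : A₄₅ ∘L A₂₃ = A₂₃ ∘L A₄₅) (c₆ : A₁₆ ∘L A₂₃ = A₂₃ ∘L A₁₆)
    -- the state and the exact ideal expectations
    (Ψ : H)
    (e₁ : A₁₂ (A₃₄ (A₅₆ Ψ)) = Ψ) (e₂ : A₄₅ (A₁₆ (A₂₃ Ψ)) = Ψ)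
    (e₃ : A₁₂ (A₄₅ Ψ) = Ψ) (e₄ : A₃₄ (A₁₆ Ψ) = Ψ) (e₅ : A₅₆ (A₂₃ Ψ) = -Ψ) :
    A₁₂ (A₁₆ Ψ) + A₁₆ (A₁₂ Ψ) = 0 ∧
    A₁₂ (A₂₃ Ψ) + A₂₃ (A₁₂ Ψ) = 0 ∧
    A₂₃ (A₃₄ Ψ) + A₃₄ (A₂₃ Ψ) = 0 ∧
    A₃₄ (A₄₅ Ψ) + A₄₅ (A₃₄ Ψ) = 0 ∧
    A₄₅ (A₅₆ Ψ) + A₅₆ (A₄₅ Ψ) = 0 ∧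
    A₅₆ (A₁₆ Ψ) + A₁₆ (A₅₆ Ψ) = 0 := by
  obtain ⟨r₁₂₃₄, r₃₄₁₂, r₁₂₅₆, r₅₆₁₂, r₃₄₅₆, r₅₆₃₄⟩ :=
    apply_apply_eq_of_apply_apply_apply_eq_self (involutive_of_comp_self_eq_one hi₁₂)
      (involutive_of_comp_self_eq_one hi₃₄) (commute_of_comp_eq_comp c₁)
      (commute_of_comp_eq_comp c₃) (commute_of_comp_eq_comp c₂) e₁
  obtain ⟨r₄₅₁₆, r₁₆₄₅, r₄₅₂₃, r₂₃₄₅, r₁₆₂₃, r₂₃₁₆⟩ :=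
    apply_apply_eq_of_apply_apply_apply_eq_self (involutive_of_comp_self_eq_one hi₄₅)
      (involutive_of_comp_self_eq_one hi₁₆) (commute_of_comp_eq_comp c₄)
      (commute_of_comp_eq_comp c₆) (commute_of_comp_eq_comp c₅) e₂
  have col₁ : A₄₅ Ψ = (1 : ℤˣ) • A₁₂ Ψ :=
    apply_eq_smul_apply_of_apply_apply_eq_smul (involutive_of_comp_self_eq_one hi₁₂)
      (by rwa [one_smul])
  have col₂ : A₁₆ Ψ = (1 : ℤˣ) • A₃₄ Ψ :=
    apply_eq_smul_apply_of_apply_apply_eq_smul (involutive_of_comp_self_eq_one hi₃₄)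
      (by rwa [one_smul])
  have col₃ : A₂₃ Ψ = (-1 : ℤˣ) • A₅₆ Ψ :=
    apply_eq_smul_apply_of_apply_apply_eq_smul (involutive_of_comp_self_eq_one hi₅₆)
      (by rwa [Units.neg_smul, one_smul])
  refine ⟨?_, ?_, (add_comm _ _).trans ?_, ?_, (add_comm _ _).trans ?_, ?_⟩
  · exact apply_add_apply_eq_zero_of_sign_square r₁₂₃₄ r₁₆₄₅ col₁ col₂ col₃ (by decide)
  · exact apply_add_apply_eq_zero_of_sign_square r₁₂₅₆ r₂₃₄₅ col₁ col₃ col₂ (by decide)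
  · exact apply_add_apply_eq_zero_of_sign_square r₃₄₅₆ r₂₃₁₆ col₂ col₃ col₁ (by decide)
  · exact apply_add_apply_eq_zero_of_sign_square r₃₄₁₂ r₄₅₁₆ col₂ col₁ col₃ (by decide)
  · exact apply_add_apply_eq_zero_of_sign_square r₅₆₁₂ r₄₅₂₃ col₃ col₁ col₂ (by decide)
  · exact apply_add_apply_eq_zero_of_sign_square r₅₆₃₄ r₁₆₂₃ col₃ col₂ col₁ (by decide)

/-- **Anti-commutativity on the state.** Under the exact ideal-expectation setup for the six
parity operators, the operators corresponding to adjacent edges anti-commute in their action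
on `Ψ`. -/
theorem adjacent_parities_anticommute_on_state
    {H : Type*} [NormedAddCommGroup H] [InnerProductSpace ℂ H] [CompleteSpace H]
    (A₁₂ A₃₄ A₅₆ A₄₅ A₁₆ A₂₃ : H →L[ℂ] H)
    -- Hermitian involutions
    (h₁₂ : IsSelfAdjoint A₁₂) (h₃₄ : IsSelfAdjoint A₃₄) (h₅₆ : IsSelfAdjoint A₅₆)
    (h₄₅ : IsSelfAdjoint A₄₅) (h₁₆ : IsSelfAdjoint A₁₆) (h₂₃ : IsSelfAdjoint A₂₃)
    (hi₁₂ : A₁₂ ∘L A₁₂ = 1) (hi₃₄ : A₃₄ ∘L A₃₄ = 1) (hi₅₆ : A₅₆ ∘L A₅₆ = 1)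
    (hi₄₅ : A₄₅ ∘L A₄₅ = 1) (hi₁₆ : A₁₆ ∘L A₁₆ = 1) (hi₂₃ : A₂₃ ∘L A₂₃ = 1)
    -- the nine same-row/same-column commutation relations
    (c₁ : A₁₂ ∘L A₃₄ = A₃₄ ∘L A₁₂) (c₂ : A₁₂ ∘L A₅₆ = A₅₆ ∘L A₁₂)
    (c₃ : A₃₄ ∘L A₅₆ = A₅₆ ∘L A₃₄) (c₄ : A₄₅ ∘L A₁₆ = A₁₆ ∘L A₄₅)
    (c₅ : A₄₅ ∘L A₂₃ = A₂₃ ∘L A₄₅) (c₆ : A₁₆ ∘L A₂₃ = A₂₃ ∘L A₁₆)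
    (c₇ : A₁₂ ∘L A₄₅ = A₄₅ ∘L A₁₂) (c₈ : A₃₄ ∘L A₁₆ = A₁₆ ∘L A₃₄)
    (c₉ : A₅₆ ∘L A₂₃ = A₂₃ ∘L A₅₆)
    -- the state and the exact ideal expectations
    (Ψ : H) (hΨ : ‖Ψ‖ = 1)
    (e₁ : A₁₂ (A₃₄ (A₅₆ Ψ)) = Ψ) (e₂ : A₄₅ (A₁₆ (A₂₃ Ψ)) = Ψ)
    (e₃ : A₁₂ (A₄₅ Ψ) = Ψ) (e₄ : A₃₄ (A₁₆ Ψ) = Ψ) (e₅ : A₅₆ (A₂₃ Ψ) = -Ψ) :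
    A₁₂ (A₁₆ Ψ) + A₁₆ (A₁₂ Ψ) = 0 ∧
    A₁₂ (A₂₃ Ψ) + A₂₃ (A₁₂ Ψ) = 0 ∧
    A₂₃ (A₃₄ Ψ) + A₃₄ (A₂₃ Ψ) = 0 ∧
    A₃₄ (A₄₅ Ψ) + A₄₅ (A₃₄ Ψ) = 0 ∧
    A₄₅ (A₅₆ Ψ) + A₅₆ (A₄₅ Ψ) = 0 ∧
    A₅₆ (A₁₆ Ψ) + A₁₆ (A₅₆ Ψ) = 0 :=
  adjacent_parities_anticommute_on_state_general A₁₂ A₃₄ A₅₆ A₄₅ A₁₆ A₂₃ hi₁₂ hi₃₄ hi₅₆ hi₄₅ hi₁₆ c₁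
    c₂ c₃ c₄ c₅ c₆ Ψ e₁ e₂ e₃ e₄ e₅
end

section
/- Under the exact ideal-expectation setup for the six parity operators, let V′ = span_ℂ {Ψ, A₁₂ Ψ, A₁₆ Ψ, A₁₂(A₁₆ Ψ)} ⊆ H. Then V′ is invariant under each of the six operators: for every A ∈ {A₁₂, A₃₄, A₅₆, A₄₅, A₁₆, A₂₃} and every v ∈ V′, A v ∈ V′. -/
/-!
Write `a = A₁₂` and `b = A₁₆`. The ideal expectations express the other four operators on `Ψ`
through `a` and `b` (`A₃₄ Ψ = b Ψ`, `A₄₅ Ψ = a Ψ`, `A₅₆ Ψ = a b Ψ`, `A₂₃ Ψ = -a b Ψ`) and force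
`b a Ψ = -a b Ψ`. With one commutation relation per operator, each of the six operators then
permutes the spanning vectors `Ψ, a Ψ, b Ψ, a b Ψ` up to sign; being an involution, it swaps them
in two pairs, so two entries of each permutation determine the other two.
-/

open Function Submodule ContinuousLinearMap

theorem Function.Involutive.apply_eq_neg_symm {M F : Type*} [AddGroup M] [FunLike F M M]
    [AddMonoidHomClass F M M] {f : F} (hf : Involutive f) {x y : M}
    (h : f x = -y) : f y = -x := by
  rw [← hf x, h, map_neg, neg_neg]

section

variable {R M : Type*} [Ring R] [TopologicalSpace M] [AddCommGroup M] [Module R M]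

theorem ContinuousLinearMap.involutive_of_comp_self_eq_one_s4 {A : M →L[R] M} (h : A ∘L A = 1) :
    Involutive A :=
  fun x => DFunLike.congr_fun h x

theorem Commute.clm_apply_apply {A B : M →L[R] M} (h : Commute A B) (x : M) : A (B x) = B (A x) :=
  DFunLike.congr_fun h.eq x

variable (a b : M →L[R] M) (ψ : M)

def quadSpan : Submodule R M := span R {ψ, a ψ, b ψ, a (b ψ)}

@[simp] theorem self_mem_quadSpan : ψ ∈ quadSpan a b ψ := subset_span (by simp)
@[simp] theorem left_mem_quadSpan : a ψ ∈ quadSpan a b ψ := subset_span (by simp)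
@[simp] theorem right_mem_quadSpan : b ψ ∈ quadSpan a b ψ := subset_span (by simp)
@[simp] theorem left_right_mem_quadSpan : a (b ψ) ∈ quadSpan a b ψ := subset_span (by simp)

variable {a b ψ}

theorem apply_mem_quadSpan {f : M →L[R] M} (h₁ : f ψ ∈ quadSpan a b ψ)
    (h₂ : f (a ψ) ∈ quadSpan a b ψ) (h₃ : f (b ψ) ∈ quadSpan a b ψ)
    (h₄ : f (a (b ψ)) ∈ quadSpan a b ψ) {v : M} (hv : v ∈ quadSpan a b ψ) :
    f v ∈ quadSpan a b ψ := by
  refine (map_span_le f.toLinearMap _ _).2 ?_ (mem_map_of_mem hv)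
  simpa only [Set.forall_mem_insert, Set.mem_singleton_iff, forall_eq] using ⟨h₁, h₂, h₃, h₄⟩

theorem left_apply_mem_quadSpan (ha : Involutive a) {v : M} (hv : v ∈ quadSpan a b ψ) :
    a v ∈ quadSpan a b ψ :=
  apply_mem_quadSpan (by simp) (by simp [ha ψ]) (by simp) (by simp [ha (b ψ)]) hv

theorem right_apply_mem_quadSpan (hb : Involutive b) (hba : b (a ψ) = -a (b ψ)) {v : M}
    (hv : v ∈ quadSpan a b ψ) : b v ∈ quadSpan a b ψ :=
  apply_mem_quadSpan (by simp) (by simp [hba]) (by simp [hb ψ])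
    (by simp [hb.apply_eq_neg_symm hba]) hv

theorem apply_mem_quadSpan_of_commute_left_of_apply_eq_right {c : M →L[R] M} (hc : Involutive c)
    (hac : Commute a c) (hcψ : c ψ = b ψ) {v : M} (hv : v ∈ quadSpan a b ψ) :
    c v ∈ quadSpan a b ψ := by
  have hcb : c (b ψ) = ψ := hcψ ▸ hc ψ
  exact apply_mem_quadSpan (by simp [hcψ]) (by simp [← hac.clm_apply_apply, hcψ]) (by simp [hcb])
    (by simp [← hac.clm_apply_apply, hcb]) hv

theorem apply_mem_quadSpan_of_commute_right_of_apply_eq_left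
    (hba : b (a ψ) = -a (b ψ)) {d : M →L[R] M} (hd : Involutive d) (hbd : Commute b d)
    (hdψ : d ψ = a ψ) {v : M} (hv : v ∈ quadSpan a b ψ) : d v ∈ quadSpan a b ψ := by
  have hda : d (a ψ) = ψ := hdψ ▸ hd ψ
  have hdb : d (b ψ) = -a (b ψ) := by rw [← hbd.clm_apply_apply, hdψ, hba]
  exact apply_mem_quadSpan (by simp [hdψ]) (by simp [hda]) (by simp [hdb])
    (by simp [hd.apply_eq_neg_symm hdb]) hv

theorem apply_mem_quadSpan_of_commute_left_of_apply_eq_left_right (ha : Involutive a)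
    {e : M →L[R] M} (he : Involutive e) (hae : Commute a e) (heψ : e ψ = a (b ψ)) {v : M}
    (hv : v ∈ quadSpan a b ψ) : e v ∈ quadSpan a b ψ := by
  have hea : e (a ψ) = b ψ := by rw [← hae.clm_apply_apply, heψ, ha]
  exact apply_mem_quadSpan (by simp [heψ]) (by simp [hea]) (by simp [← hea, he (a ψ)])
    (by simp [← heψ, he ψ]) hv

theorem apply_mem_quadSpan_of_commute_right_of_apply_eq_neg_left_right (hb : Involutive b)
    (hba : b (a ψ) = -a (b ψ)) {f : M →L[R] M} (hf : Involutive f) (hbf : Commute b f)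
    (hfψ : f ψ = -a (b ψ)) {v : M} (hv : v ∈ quadSpan a b ψ) : f v ∈ quadSpan a b ψ := by
  have hfb : f (b ψ) = a ψ := by
    rw [← hbf.clm_apply_apply, hfψ, map_neg, hb.apply_eq_neg_symm hba, neg_neg]
  exact apply_mem_quadSpan (by simp [hfψ]) (by simp [← hfb, hf (b ψ)]) (by simp [hfb])
    (by simp [hf.apply_eq_neg_symm hfψ]) hv

end

theorem span_invariant_under_parities_general
    {H : Type*} [NormedAddCommGroup H] [InnerProductSpace ℂ H]
    (A₁₂ A₃₄ A₅₆ A₄₅ A₁₆ A₂₃ : H →L[ℂ] H)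
    (hi₁₂ : A₁₂ ∘L A₁₂ = 1) (hi₃₄ : A₃₄ ∘L A₃₄ = 1) (hi₅₆ : A₅₆ ∘L A₅₆ = 1)
    (hi₄₅ : A₄₅ ∘L A₄₅ = 1) (hi₁₆ : A₁₆ ∘L A₁₆ = 1) (hi₂₃ : A₂₃ ∘L A₂₃ = 1)
    (c₁ : A₁₂ ∘L A₃₄ = A₃₄ ∘L A₁₂) (c₂ : A₁₂ ∘L A₅₆ = A₅₆ ∘L A₁₂)
    (c₄ : A₄₅ ∘L A₁₆ = A₁₆ ∘L A₄₅) (c₆ : A₁₆ ∘L A₂₃ = A₂₃ ∘L A₁₆)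
    (Ψ : H)
    (e₁ : A₁₂ (A₃₄ (A₅₆ Ψ)) = Ψ) (e₂ : A₄₅ (A₁₆ (A₂₃ Ψ)) = Ψ)
    (e₃ : A₁₂ (A₄₅ Ψ) = Ψ) (e₄ : A₃₄ (A₁₆ Ψ) = Ψ) (e₅ : A₅₆ (A₂₃ Ψ) = -Ψ) :
    ∀ v ∈ Submodule.span ℂ ({Ψ, A₁₂ Ψ, A₁₆ Ψ, A₁₂ (A₁₆ Ψ)} : Set H),
      A₁₂ v ∈ Submodule.span ℂ ({Ψ, A₁₂ Ψ, A₁₆ Ψ, A₁₂ (A₁₆ Ψ)} : Set H) ∧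
      A₃₄ v ∈ Submodule.span ℂ ({Ψ, A₁₂ Ψ, A₁₆ Ψ, A₁₂ (A₁₆ Ψ)} : Set H) ∧
      A₅₆ v ∈ Submodule.span ℂ ({Ψ, A₁₂ Ψ, A₁₆ Ψ, A₁₂ (A₁₆ Ψ)} : Set H) ∧
      A₄₅ v ∈ Submodule.span ℂ ({Ψ, A₁₂ Ψ, A₁₆ Ψ, A₁₂ (A₁₆ Ψ)} : Set H) ∧
      A₁₆ v ∈ Submodule.span ℂ ({Ψ, A₁₂ Ψ, A₁₆ Ψ, A₁₂ (A₁₆ Ψ)} : Set H) ∧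
      A₂₃ v ∈ Submodule.span ℂ ({Ψ, A₁₂ Ψ, A₁₆ Ψ, A₁₂ (A₁₆ Ψ)} : Set H) := by
  have i₁₂ := involutive_of_comp_self_eq_one_s4 hi₁₂
  have i₃₄ := involutive_of_comp_self_eq_one_s4 hi₃₄
  have i₅₆ := involutive_of_comp_self_eq_one_s4 hi₅₆
  have i₄₅ := involutive_of_comp_self_eq_one_s4 hi₄₅
  have i₁₆ := involutive_of_comp_self_eq_one_s4 hi₁₆
  have i₂₃ := involutive_of_comp_self_eq_one_s4 hi₂₃
  have h₄₅ : A₄₅ Ψ = A₁₂ Ψ := i₁₂.eq_iff.mp e₃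
  have h₃₄ : A₃₄ Ψ = A₁₆ Ψ := (i₃₄.eq_iff.mp e₄).symm
  have h₅₆ : A₅₆ Ψ = A₁₂ (A₁₆ Ψ) := by
    rw [i₃₄.eq_iff.mp (i₁₂.eq_iff.mp e₁), ← Commute.clm_apply_apply c₁, h₃₄]
  have h₂₃ : A₂₃ Ψ = -A₁₂ (A₁₆ Ψ) := by rw [i₅₆.eq_iff.mp e₅, map_neg, h₅₆]
  have anticomm : A₁₆ (A₁₂ Ψ) = -A₁₂ (A₁₆ Ψ) := by
    have h := i₄₅.eq_iff.mp e₂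
    rw [h₂₃, h₄₅, map_neg, neg_eq_iff_eq_neg] at h
    exact i₁₆.apply_eq_neg_symm h
  intro v hv
  exact ⟨left_apply_mem_quadSpan i₁₂ hv,
    apply_mem_quadSpan_of_commute_left_of_apply_eq_right i₃₄ c₁ h₃₄ hv,
    apply_mem_quadSpan_of_commute_left_of_apply_eq_left_right i₁₂ i₅₆ c₂ h₅₆ hv,
    apply_mem_quadSpan_of_commute_right_of_apply_eq_left anticomm i₄₅ c₄.symm h₄₅ hv,
    right_apply_mem_quadSpan i₁₆ anticomm hv,
    apply_mem_quadSpan_of_commute_right_of_apply_eq_neg_left_right i₁₆ anticomm i₂₃ c₆ h₂₃ hv⟩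

/-- **Invariance of the subspace `V'`.** Under the exact ideal-expectation setup for the six
parity operators, the subspace `V' = span {Ψ, A₁₂ Ψ, A₁₆ Ψ, A₁₂ (A₁₆ Ψ)}` is invariant under
each of the six operators. -/
theorem span_invariant_under_parities
    {H : Type*} [NormedAddCommGroup H] [InnerProductSpace ℂ H] [CompleteSpace H]
    (A₁₂ A₃₄ A₅₆ A₄₅ A₁₆ A₂₃ : H →L[ℂ] H)
    (h₁₂ : IsSelfAdjoint A₁₂) (h₃₄ : IsSelfAdjoint A₃₄) (h₅₆ : IsSelfAdjoint A₅₆)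
    (h₄₅ : IsSelfAdjoint A₄₅) (h₁₆ : IsSelfAdjoint A₁₆) (h₂₃ : IsSelfAdjoint A₂₃)
    (hi₁₂ : A₁₂ ∘L A₁₂ = 1) (hi₃₄ : A₃₄ ∘L A₃₄ = 1) (hi₅₆ : A₅₆ ∘L A₅₆ = 1)
    (hi₄₅ : A₄₅ ∘L A₄₅ = 1) (hi₁₆ : A₁₆ ∘L A₁₆ = 1) (hi₂₃ : A₂₃ ∘L A₂₃ = 1)
    (c₁ : A₁₂ ∘L A₃₄ = A₃₄ ∘L A₁₂) (c₂ : A₁₂ ∘L A₅₆ = A₅₆ ∘L A₁₂)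
    (c₃ : A₃₄ ∘L A₅₆ = A₅₆ ∘L A₃₄) (c₄ : A₄₅ ∘L A₁₆ = A₁₆ ∘L A₄₅)
    (c₅ : A₄₅ ∘L A₂₃ = A₂₃ ∘L A₄₅) (c₆ : A₁₆ ∘L A₂₃ = A₂₃ ∘L A₁₆)
    (c₇ : A₁₂ ∘L A₄₅ = A₄₅ ∘L A₁₂) (c₈ : A₃₄ ∘L A₁₆ = A₁₆ ∘L A₃₄)
    (c₉ : A₅₆ ∘L A₂₃ = A₂₃ ∘L A₅₆)
    (Ψ : H) (hΨ : ‖Ψ‖ = 1)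
    (e₁ : A₁₂ (A₃₄ (A₅₆ Ψ)) = Ψ) (e₂ : A₄₅ (A₁₆ (A₂₃ Ψ)) = Ψ)
    (e₃ : A₁₂ (A₄₅ Ψ) = Ψ) (e₄ : A₃₄ (A₁₆ Ψ) = Ψ) (e₅ : A₅₆ (A₂₃ Ψ) = -Ψ) :
    ∀ v ∈ Submodule.span ℂ ({Ψ, A₁₂ Ψ, A₁₆ Ψ, A₁₂ (A₁₆ Ψ)} : Set H),
      A₁₂ v ∈ Submodule.span ℂ ({Ψ, A₁₂ Ψ, A₁₆ Ψ, A₁₂ (A₁₆ Ψ)} : Set H) ∧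
      A₃₄ v ∈ Submodule.span ℂ ({Ψ, A₁₂ Ψ, A₁₆ Ψ, A₁₂ (A₁₆ Ψ)} : Set H) ∧
      A₅₆ v ∈ Submodule.span ℂ ({Ψ, A₁₂ Ψ, A₁₆ Ψ, A₁₂ (A₁₆ Ψ)} : Set H) ∧
      A₄₅ v ∈ Submodule.span ℂ ({Ψ, A₁₂ Ψ, A₁₆ Ψ, A₁₂ (A₁₆ Ψ)} : Set H) ∧
      A₁₆ v ∈ Submodule.span ℂ ({Ψ, A₁₂ Ψ, A₁₆ Ψ, A₁₂ (A₁₆ Ψ)} : Set H) ∧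
      A₂₃ v ∈ Submodule.span ℂ ({Ψ, A₁₂ Ψ, A₁₆ Ψ, A₁₂ (A₁₆ Ψ)} : Set H) :=
  span_invariant_under_parities_general A₁₂ A₃₄ A₅₆ A₄₅ A₁₆ A₂₃ hi₁₂ hi₃₄ hi₅₆ hi₄₅ hi₁₆ hi₂₃ c₁ c₂
    c₄ c₆ Ψ e₁ e₂ e₃ e₄ e₅
end

section
/- Rigidity of Majorana parities: suppose the six Hermitian involutions satisfy the nine commutation relations and the unit vector Ψ satisfies the ideal expectations ⟪Ψ, A₁₂(A₃₄(A₅₆ Ψ))⟫ = 1, ⟪Ψ, A₄₅(A₁₆(A₂₃ Ψ))⟫ = 1, ⟪Ψ, A₁₂(A₄₅ Ψ)⟫ = 1, ⟪Ψ, A₃₄(A₁₆ Ψ)⟫ = 1, ⟪Ψ, A₅₆(A₂₃ Ψ)⟫ = −1. Let V = span_ℂ {Ψ, A₁₂ Ψ, A₁₆ Ψ, A₁₂(A₁₆ Ψ)} and let P be the orthogonal projection of H onto V. Then: (i) V has dimension 4 (finrank ℂ V = 4); (ii) V is invariant under each of the six operators; (iii) the compressions 𝔸_r = P ∘ A_r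 ∘ P anti-commute for every adjacent pair, i.e. 𝔸_r ∘ 𝔸_s + 𝔸_s ∘ 𝔸_r = 0 for (r,s) ∈ {(12,16), (12,23), (23,34), (34,45), (45,56), (56,16)}; and (iv) A₁₂(A₄₅ Ψ) = Ψ and A₃₄(A₁₆ Ψ) = Ψ. -/
open scoped InnerProductSpace

section Aux
variable {H : Type*} [NormedAddCommGroup H] [InnerProductSpace ℂ H] [CompleteSpace H]

private lemma aux_symm (A : H →L[ℂ] H) (hA : IsSelfAdjoint A) (x y : H) :
    ⟪A x, y⟫_ℂ = ⟪x, A y⟫_ℂ :=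
  (ContinuousLinearMap.isSelfAdjoint_iff_isSymmetric.mp hA) x y

private lemma aux_sq (A : H →L[ℂ] H) (hi : A ∘L A = 1) (x : H) : A (A x) = x := by
  simpa using DFunLike.congr_fun hi x

private lemma aux_uinner (A : H →L[ℂ] H) (hA : IsSelfAdjoint A) (hi : A ∘L A = 1) (x y : H) :
    ⟪A x, A y⟫_ℂ = ⟪x, y⟫_ℂ := by
  rw [aux_symm A hA, aux_sq A hi]

private lemma aux_fix (A : H →L[ℂ] H) (hA : IsSelfAdjoint A) (hi : A ∘L A = 1)
    (Ψ : H) (hΨ : ‖Ψ‖ = 1) (he : ⟪Ψ, A Ψ⟫_ℂ = 1) : A Ψ = Ψ := by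
  have hΨΨ : ⟪Ψ, Ψ⟫_ℂ = 1 := by
    rw [inner_self_eq_norm_sq_to_K, hΨ]; norm_num
  have h0 : ⟪A Ψ - Ψ, A Ψ - Ψ⟫_ℂ = 0 := by
    rw [inner_sub_sub_self, aux_uinner A hA hi, aux_symm A hA, hΨΨ, he]
    ring
  exact sub_eq_zero.mp (inner_self_eq_zero.mp h0)

private lemma aux_fix_neg (A : H →L[ℂ] H) (hA : IsSelfAdjoint A) (hi : A ∘L A = 1)
    (Ψ : H) (hΨ : ‖Ψ‖ = 1) (he : ⟪Ψ, A Ψ⟫_ℂ = -1) : A Ψ = -Ψ := by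
  have hΨΨ : ⟪Ψ, Ψ⟫_ℂ = 1 := by
    rw [inner_self_eq_norm_sq_to_K, hΨ]; norm_num
  have h0 : ⟪A Ψ + Ψ, A Ψ + Ψ⟫_ℂ = 0 := by
    rw [inner_add_add_self, aux_uinner A hA hi, aux_symm A hA, hΨΨ, he]
    ring
  have := inner_self_eq_zero.mp h0
  linear_combination (norm := module) this

private lemma aux_pair_sa (A B : H →L[ℂ] H) (hA : IsSelfAdjoint A) (hB : IsSelfAdjoint B)
    (hc : A ∘L B = B ∘L A) : IsSelfAdjoint (A ∘L B) := by
  have : star (A * B) = A * B := by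
    rw [star_mul, hA.star_eq, hB.star_eq, ContinuousLinearMap.mul_def,
      ContinuousLinearMap.mul_def, ← hc]
  exact this

private lemma aux_pair_inv (A B : H →L[ℂ] H) (hiA : A ∘L A = 1) (hiB : B ∘L B = 1)
    (hc : A ∘L B = B ∘L A) : (A ∘L B) ∘L (A ∘L B) = 1 := by
  ext x
  have hc' : ∀ y, A (B y) = B (A y) := fun y => DFunLike.congr_fun hc y
  have hA' : ∀ y, A (A y) = y := aux_sq A hiA
  have hB' : ∀ y, B (B y) = y := aux_sq B hiB
  simp [hc', hA', hB']

end Aux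

/-- **Rigidity of Majorana parities.** If the six Hermitian involutions satisfy the nine
same-row/same-column commutation relations and the unit state `Ψ` achieves the ideal
expectations, then the subspace `V = span {Ψ, A₁₂ Ψ, A₁₆ Ψ, A₁₂ (A₁₆ Ψ)}` is 4-dimensional
and invariant under each operator, the compressions `𝔸_r = P ∘ A_r ∘ P` by the orthogonal
projection `P` onto `V` anti-commute for every adjacent pair, and
`A₁₂ (A₄₅ Ψ) = Ψ`, `A₃₄ (A₁₆ Ψ) = Ψ`. -/
theorem rigidity_of_majorana_parities
    {H : Type*} [NormedAddCommGroup H] [InnerProductSpace ℂ H] [CompleteSpace H]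
    (A₁₂ A₃₄ A₅₆ A₄₅ A₁₆ A₂₃ : H →L[ℂ] H)
    (h₁₂ : IsSelfAdjoint A₁₂) (h₃₄ : IsSelfAdjoint A₃₄) (h₅₆ : IsSelfAdjoint A₅₆)
    (h₄₅ : IsSelfAdjoint A₄₅) (h₁₆ : IsSelfAdjoint A₁₆) (h₂₃ : IsSelfAdjoint A₂₃)
    (hi₁₂ : A₁₂ ∘L A₁₂ = 1) (hi₃₄ : A₃₄ ∘L A₃₄ = 1) (hi₅₆ : A₅₆ ∘L A₅₆ = 1)
    (hi₄₅ : A₄₅ ∘L A₄₅ = 1) (hi₁₆ : A₁₆ ∘L A₁₆ = 1) (hi₂₃ : A₂₃ ∘L A₂₃ = 1)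
    (c₁ : A₁₂ ∘L A₃₄ = A₃₄ ∘L A₁₂) (c₂ : A₁₂ ∘L A₅₆ = A₅₆ ∘L A₁₂)
    (c₃ : A₃₄ ∘L A₅₆ = A₅₆ ∘L A₃₄) (c₄ : A₄₅ ∘L A₁₆ = A₁₆ ∘L A₄₅)
    (c₅ : A₄₅ ∘L A₂₃ = A₂₃ ∘L A₄₅) (c₆ : A₁₆ ∘L A₂₃ = A₂₃ ∘L A₁₆)
    (c₇ : A₁₂ ∘L A₄₅ = A₄₅ ∘L A₁₂) (c₈ : A₃₄ ∘L A₁₆ = A₁₆ ∘L A₃₄)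
    (c₉ : A₅₆ ∘L A₂₃ = A₂₃ ∘L A₅₆)
    (Ψ : H) (hΨ : ‖Ψ‖ = 1)
    -- ideal expectations
    (e₁ : ⟪Ψ, A₁₂ (A₃₄ (A₅₆ Ψ))⟫_ℂ = 1) (e₂ : ⟪Ψ, A₄₅ (A₁₆ (A₂₃ Ψ))⟫_ℂ = 1)
    (e₃ : ⟪Ψ, A₁₂ (A₄₅ Ψ)⟫_ℂ = 1) (e₄ : ⟪Ψ, A₃₄ (A₁₆ Ψ)⟫_ℂ = 1)
    (e₅ : ⟪Ψ, A₅₆ (A₂₃ Ψ)⟫_ℂ = -1)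
    -- the subspace V and the orthogonal projection P onto V
    (V : Submodule ℂ H)
    (hV : V = Submodule.span ℂ ({Ψ, A₁₂ Ψ, A₁₆ Ψ, A₁₂ (A₁₆ Ψ)} : Set H))
    (P : H →L[ℂ] H)
    (hP : IsSelfAdjoint P) (hPmem : ∀ x : H, P x ∈ V) (hPfix : ∀ v ∈ V, P v = v) :
    -- (i) V is 4-dimensional
    Module.finrank ℂ V = 4 ∧
    -- (ii) V is invariant under each of the six operators
    (∀ v ∈ V, A₁₂ v ∈ V ∧ A₃₄ v ∈ V ∧ A₅₆ v ∈ V ∧ A₄₅ v ∈ V ∧ A₁₆ v ∈ V ∧ A₂₃ v ∈ V) ∧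
    -- (iii) the compressions anti-commute for every adjacent pair
    ((P ∘L A₁₂ ∘L P) ∘L (P ∘L A₁₆ ∘L P) + (P ∘L A₁₆ ∘L P) ∘L (P ∘L A₁₂ ∘L P) = 0 ∧
     (P ∘L A₁₂ ∘L P) ∘L (P ∘L A₂₃ ∘L P) + (P ∘L A₂₃ ∘L P) ∘L (P ∘L A₁₂ ∘L P) = 0 ∧
     (P ∘L A₂₃ ∘L P) ∘L (P ∘L A₃₄ ∘L P) + (P ∘L A₃₄ ∘L P) ∘L (P ∘L A₂₃ ∘L P) = 0 ∧
     (P ∘L A₃₄ ∘L P) ∘L (P ∘L A₄₅ ∘L P) + (P ∘L A₄₅ ∘L P) ∘L (P ∘L A₃₄ ∘L P) = 0 ∧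
     (P ∘L A₄₅ ∘L P) ∘L (P ∘L A₅₆ ∘L P) + (P ∘L A₅₆ ∘L P) ∘L (P ∘L A₄₅ ∘L P) = 0 ∧
     (P ∘L A₅₆ ∘L P) ∘L (P ∘L A₁₆ ∘L P) + (P ∘L A₁₆ ∘L P) ∘L (P ∘L A₅₆ ∘L P) = 0) ∧
    -- (iv) the state is stabilized by the column products
    A₁₂ (A₄₅ Ψ) = Ψ ∧ A₃₄ (A₁₆ Ψ) = Ψ := by
  -- pointwise versions of the involutions and commutations
  have s₁₂ := aux_sq A₁₂ hi₁₂
  have s₃₄ := aux_sq A₃₄ hi₃₄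
  have s₅₆ := aux_sq A₅₆ hi₅₆
  have s₄₅ := aux_sq A₄₅ hi₄₅
  have s₁₆ := aux_sq A₁₆ hi₁₆
  have s₂₃ := aux_sq A₂₃ hi₂₃
  have cc₁ : ∀ x, A₁₂ (A₃₄ x) = A₃₄ (A₁₂ x) := fun x => DFunLike.congr_fun c₁ x
  have cc₂ : ∀ x, A₁₂ (A₅₆ x) = A₅₆ (A₁₂ x) := fun x => DFunLike.congr_fun c₂ x
  have cc₃ : ∀ x, A₃₄ (A₅₆ x) = A₅₆ (A₃₄ x) := fun x => DFunLike.congr_fun c₃ x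
  have cc₄ : ∀ x, A₄₅ (A₁₆ x) = A₁₆ (A₄₅ x) := fun x => DFunLike.congr_fun c₄ x
  have cc₅ : ∀ x, A₄₅ (A₂₃ x) = A₂₃ (A₄₅ x) := fun x => DFunLike.congr_fun c₅ x
  have cc₆ : ∀ x, A₁₆ (A₂₃ x) = A₂₃ (A₁₆ x) := fun x => DFunLike.congr_fun c₆ x
  have cc₇ : ∀ x, A₁₂ (A₄₅ x) = A₄₅ (A₁₂ x) := fun x => DFunLike.congr_fun c₇ x
  have cc₉ : ∀ x, A₅₆ (A₂₃ x) = A₂₃ (A₅₆ x) := fun x => DFunLike.congr_fun c₉ x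
  -- the five "stabilizer" equations
  have k₃ : A₁₂ (A₄₅ Ψ) = Ψ := by
    have := aux_fix (A₁₂ ∘L A₄₅) (aux_pair_sa _ _ h₁₂ h₄₅ c₇) (aux_pair_inv _ _ hi₁₂ hi₄₅ c₇)
      Ψ hΨ (by simpa using e₃)
    simpa using this
  have k₄ : A₃₄ (A₁₆ Ψ) = Ψ := by
    have := aux_fix (A₃₄ ∘L A₁₆) (aux_pair_sa _ _ h₃₄ h₁₆ c₈) (aux_pair_inv _ _ hi₃₄ hi₁₆ c₈)
      Ψ hΨ (by simpa using e₄)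
    simpa using this
  have k₅ : A₅₆ (A₂₃ Ψ) = -Ψ := by
    have := aux_fix_neg (A₅₆ ∘L A₂₃) (aux_pair_sa _ _ h₅₆ h₂₃ c₉) (aux_pair_inv _ _ hi₅₆ hi₂₃ c₉)
      Ψ hΨ (by simpa using e₅)
    simpa using this
  have ct₁ : A₁₂ ∘L (A₃₄ ∘L A₅₆) = (A₃₄ ∘L A₅₆) ∘L A₁₂ := by
    rw [← ContinuousLinearMap.comp_assoc, c₁, ContinuousLinearMap.comp_assoc, c₂,
      ← ContinuousLinearMap.comp_assoc]
  have ct₂ : A₄₅ ∘L (A₁₆ ∘L A₂₃) = (A₁₆ ∘L A₂₃) ∘L A₄₅ := by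
    rw [← ContinuousLinearMap.comp_assoc, c₄, ContinuousLinearMap.comp_assoc, c₅,
      ← ContinuousLinearMap.comp_assoc]
  have k₁ : A₁₂ (A₃₄ (A₅₆ Ψ)) = Ψ := by
    have := aux_fix (A₁₂ ∘L (A₃₄ ∘L A₅₆))
      (aux_pair_sa _ _ h₁₂ (aux_pair_sa _ _ h₃₄ h₅₆ c₃) ct₁)
      (aux_pair_inv _ _ hi₁₂ (aux_pair_inv _ _ hi₃₄ hi₅₆ c₃) ct₁)
      Ψ hΨ (by simpa using e₁)
    simpa using this
  have k₂ : A₄₅ (A₁₆ (A₂₃ Ψ)) = Ψ := by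
    have := aux_fix (A₄₅ ∘L (A₁₆ ∘L A₂₃))
      (aux_pair_sa _ _ h₄₅ (aux_pair_sa _ _ h₁₆ h₂₃ c₆) ct₂)
      (aux_pair_inv _ _ hi₄₅ (aux_pair_inv _ _ hi₁₆ hi₂₃ c₆) ct₂)
      Ψ hΨ (by simpa using e₂)
    simpa using this
  -- the action table on the four spanning vectors
  have T45u : A₄₅ Ψ = A₁₂ Ψ := by
    have := congrArg A₁₂ k₃; rwa [s₁₂] at this
  have T34u : A₃₄ Ψ = A₁₆ Ψ := by
    have := congrArg A₃₄ k₄; rw [s₃₄] at this; exact this.symm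
  have T34b : A₃₄ (A₁₆ Ψ) = Ψ := k₄
  have T34a : A₃₄ (A₁₂ Ψ) = A₁₂ (A₁₆ Ψ) := by rw [← cc₁, T34u]
  have T34c : A₃₄ (A₁₂ (A₁₆ Ψ)) = A₁₂ Ψ := by rw [← cc₁, T34b]
  have T56u : A₅₆ Ψ = A₁₂ (A₁₆ Ψ) := by
    have h1 : A₃₄ (A₅₆ Ψ) = A₁₂ Ψ := by
      have := congrArg A₁₂ k₁; rwa [s₁₂] at this
    have := congrArg A₃₄ h1
    rw [s₃₄, T34a] at this
    exact this
  have T23u : A₂₃ Ψ = -(A₁₂ (A₁₆ Ψ)) := by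
    have := congrArg A₅₆ k₅
    rw [s₅₆, map_neg, T56u] at this
    exact this
  have T16c : A₁₆ (A₁₂ (A₁₆ Ψ)) = -(A₁₂ Ψ) := by
    have hk : A₄₅ (A₁₆ (A₁₂ (A₁₆ Ψ))) = -Ψ := by
      have h := k₂
      rw [T23u, map_neg, map_neg] at h
      linear_combination (norm := module) -h
    have := congrArg A₄₅ hk
    rw [s₄₅, map_neg, T45u] at this
    exact this
  have T16a : A₁₆ (A₁₂ Ψ) = -(A₁₂ (A₁₆ Ψ)) := by
    have := congrArg A₁₆ T16c
    rw [s₁₆, map_neg] at this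
    rw [this, neg_neg]
  have T45a : A₄₅ (A₁₂ Ψ) = Ψ := by rw [← cc₇, T45u, s₁₂]
  have T45b : A₄₅ (A₁₆ Ψ) = -(A₁₂ (A₁₆ Ψ)) := by rw [cc₄, T45u, T16a]
  have T45c : A₄₅ (A₁₂ (A₁₆ Ψ)) = -(A₁₆ Ψ) := by rw [← cc₇, T45b, map_neg, s₁₂]
  have T56a : A₅₆ (A₁₂ Ψ) = A₁₆ Ψ := by rw [← cc₂, T56u, s₁₂]
  have T56b : A₅₆ (A₁₆ Ψ) = A₁₂ Ψ := by rw [← T34u, ← cc₃, T56u, T34c]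
  have T56c : A₅₆ (A₁₂ (A₁₆ Ψ)) = Ψ := by rw [← T56u, s₅₆]
  have T23a : A₂₃ (A₁₂ Ψ) = A₁₆ Ψ := by
    rw [← T45u, ← cc₅, T23u, map_neg, T45c, neg_neg]
  have T23b : A₂₃ (A₁₆ Ψ) = A₁₂ Ψ := by
    rw [← cc₆, T23u, map_neg, T16c, neg_neg]
  have T23c : A₂₃ (A₁₂ (A₁₆ Ψ)) = -Ψ := by
    rw [← T56u, ← cc₉, T23u, map_neg, T56c]
  -- inner products: the four vectors are orthonormal
  have huu : ⟪Ψ, Ψ⟫_ℂ = 1 := by rw [inner_self_eq_norm_sq_to_K, hΨ]; norm_num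
  have ui₁₂ := aux_uinner A₁₂ h₁₂ hi₁₂
  have ui₄₅ := aux_uinner A₄₅ h₄₅ hi₄₅
  have ui₁₆ := aux_uinner A₁₆ h₁₆ hi₁₆
  have ui₂₃ := aux_uinner A₂₃ h₂₃ hi₂₃
  have ui₅₆ := aux_uinner A₅₆ h₅₆ hi₅₆
  -- ⟪a,c⟫ = 0 and ⟪u,b⟫ = 0
  have oac : ⟪A₁₂ Ψ, A₁₂ (A₁₆ Ψ)⟫_ℂ = 0 := by
    have e1 : ⟪A₁₂ Ψ, A₁₂ (A₁₆ Ψ)⟫_ℂ = ⟪Ψ, A₁₆ Ψ⟫_ℂ := ui₁₂ Ψ (A₁₆ Ψ)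
    have e2 : ⟪A₄₅ Ψ, A₄₅ (A₁₆ Ψ)⟫_ℂ = ⟪Ψ, A₁₆ Ψ⟫_ℂ := ui₄₅ Ψ (A₁₆ Ψ)
    rw [T45u, T45b, inner_neg_right, e1] at e2
    linear_combination e1 - e2 / 2
  have oub : ⟪Ψ, A₁₆ Ψ⟫_ℂ = 0 := by rw [← ui₁₂ Ψ (A₁₆ Ψ), oac]
  -- ⟪c,b⟫ = 0 and ⟪u,a⟫ = 0
  have ocb : ⟪A₁₂ (A₁₆ Ψ), A₁₆ Ψ⟫_ℂ = 0 := by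
    have e1 : ⟪A₅₆ Ψ, A₅₆ (A₁₂ Ψ)⟫_ℂ = ⟪Ψ, A₁₂ Ψ⟫_ℂ := ui₅₆ Ψ (A₁₂ Ψ)
    have e2 : ⟪A₂₃ Ψ, A₂₃ (A₁₂ Ψ)⟫_ℂ = ⟪Ψ, A₁₂ Ψ⟫_ℂ := ui₂₃ Ψ (A₁₂ Ψ)
    rw [T56u, T56a] at e1
    rw [T23u, T23a, inner_neg_left] at e2
    linear_combination (e1 - e2) / 2
  have oua : ⟪Ψ, A₁₂ Ψ⟫_ℂ = 0 := by
    have e1 : ⟪A₅₆ Ψ, A₅₆ (A₁₂ Ψ)⟫_ℂ = ⟪Ψ, A₁₂ Ψ⟫_ℂ := ui₅₆ Ψ (A₁₂ Ψ)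
    rw [T56u, T56a, ocb] at e1
    exact e1.symm
  -- ⟪a,b⟫ = 0 and ⟪u,c⟫ = 0
  have oab : ⟪A₁₂ Ψ, A₁₆ Ψ⟫_ℂ = 0 := by
    have e1 : ⟪A₁₂ Ψ, A₁₂ (A₁₂ (A₁₆ Ψ))⟫_ℂ = ⟪Ψ, A₁₂ (A₁₆ Ψ)⟫_ℂ := ui₁₂ Ψ (A₁₂ (A₁₆ Ψ))
    have e2 : ⟪A₄₅ Ψ, A₄₅ (A₁₂ (A₁₆ Ψ))⟫_ℂ = ⟪Ψ, A₁₂ (A₁₆ Ψ)⟫_ℂ := ui₄₅ Ψ (A₁₂ (A₁₆ Ψ))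
    rw [s₁₂] at e1
    rw [T45u, T45c, inner_neg_right] at e2
    linear_combination (e1 - e2) / 2
  have ouc : ⟪Ψ, A₁₂ (A₁₆ Ψ)⟫_ℂ = 0 := by
    have e1 : ⟪A₁₂ Ψ, A₁₂ (A₁₂ (A₁₆ Ψ))⟫_ℂ = ⟪Ψ, A₁₂ (A₁₆ Ψ)⟫_ℂ := ui₁₂ Ψ (A₁₂ (A₁₆ Ψ))
    rw [s₁₂, oab] at e1
    exact e1.symm
  -- norms of the images
  have haa : ⟪A₁₂ Ψ, A₁₂ Ψ⟫_ℂ = 1 := by rw [ui₁₂, huu]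
  have hbb : ⟪A₁₆ Ψ, A₁₆ Ψ⟫_ℂ = 1 := by rw [ui₁₆, huu]
  have hcc : ⟪A₁₂ (A₁₆ Ψ), A₁₂ (A₁₆ Ψ)⟫_ℂ = 1 := by rw [ui₁₂, hbb]
  -- symmetric versions
  have obu : ⟪A₁₆ Ψ, Ψ⟫_ℂ = 0 := by rwa [← inner_eq_zero_symm]
  have oca : ⟪A₁₂ (A₁₆ Ψ), A₁₂ Ψ⟫_ℂ = 0 := by rwa [← inner_eq_zero_symm]
  have obc : ⟪A₁₆ Ψ, A₁₂ (A₁₆ Ψ)⟫_ℂ = 0 := by rwa [← inner_eq_zero_symm]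
  have oau : ⟪A₁₂ Ψ, Ψ⟫_ℂ = 0 := by rwa [← inner_eq_zero_symm]
  have oba : ⟪A₁₆ Ψ, A₁₂ Ψ⟫_ℂ = 0 := by rwa [← inner_eq_zero_symm]
  have ocu : ⟪A₁₂ (A₁₆ Ψ), Ψ⟫_ℂ = 0 := by rwa [← inner_eq_zero_symm]
  -- (i) dimension
  have hON : Orthonormal ℂ ![Ψ, A₁₂ Ψ, A₁₆ Ψ, A₁₂ (A₁₆ Ψ)] := by
    rw [orthonormal_iff_ite]
    intro i j
    fin_cases i <;> fin_cases j <;>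
      simp [huu, haa, hbb, hcc, oua, oub, ouc, oab, oac, ocb, obu, oca, obc, oau, oba, ocu,
        -inner_self_eq_norm_sq_to_K]
  have hrange : Set.range ![Ψ, A₁₂ Ψ, A₁₆ Ψ, A₁₂ (A₁₆ Ψ)]
      = ({Ψ, A₁₂ Ψ, A₁₆ Ψ, A₁₂ (A₁₆ Ψ)} : Set H) := by
    ext x
    simp [Matrix.range_cons, Matrix.range_empty]
    tauto
  have hfr : Module.finrank ℂ V = 4 := by
    rw [hV, ← hrange]
    simpa using finrank_span_eq_card hON.linearIndependent
  -- membership facts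
  have memu : Ψ ∈ V := by rw [hV]; exact Submodule.subset_span (by simp)
  have mema : A₁₂ Ψ ∈ V := by rw [hV]; exact Submodule.subset_span (by simp)
  have memb : A₁₆ Ψ ∈ V := by rw [hV]; exact Submodule.subset_span (by simp)
  have memc : A₁₂ (A₁₆ Ψ) ∈ V := by rw [hV]; exact Submodule.subset_span (by simp)
  -- invariance helper
  have inv_of : ∀ (T : H →L[ℂ] H), T Ψ ∈ V → T (A₁₂ Ψ) ∈ V → T (A₁₆ Ψ) ∈ V →
      T (A₁₂ (A₁₆ Ψ)) ∈ V → ∀ v ∈ V, T v ∈ V := by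
    intro T h1 h2 h3 h4 v hv
    rw [hV] at hv
    have hle : Submodule.span ℂ ({Ψ, A₁₂ Ψ, A₁₆ Ψ, A₁₂ (A₁₆ Ψ)} : Set H)
        ≤ Submodule.comap (T : H →ₗ[ℂ] H) V := by
      rw [Submodule.span_le]
      rintro x (rfl | rfl | rfl | rfl) <;>
        simp only [SetLike.mem_coe, Submodule.mem_comap, ContinuousLinearMap.coe_coe] <;>
        assumption
    exact hle hv
  have inv₁₂ : ∀ v ∈ V, A₁₂ v ∈ V :=
    inv_of A₁₂ mema (by rw [s₁₂]; exact memu) memc (by rw [s₁₂]; exact memb)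
  have inv₃₄ : ∀ v ∈ V, A₃₄ v ∈ V :=
    inv_of A₃₄ (by rw [T34u]; exact memb) (by rw [T34a]; exact memc)
      (by rw [T34b]; exact memu) (by rw [T34c]; exact mema)
  have inv₅₆ : ∀ v ∈ V, A₅₆ v ∈ V :=
    inv_of A₅₆ (by rw [T56u]; exact memc) (by rw [T56a]; exact memb)
      (by rw [T56b]; exact mema) (by rw [T56c]; exact memu)
  have inv₄₅ : ∀ v ∈ V, A₄₅ v ∈ V :=
    inv_of A₄₅ (by rw [T45u]; exact mema) (by rw [T45a]; exact memu)
      (by rw [T45b]; exact neg_mem memc) (by rw [T45c]; exact neg_mem memb)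
  have inv₁₆ : ∀ v ∈ V, A₁₆ v ∈ V :=
    inv_of A₁₆ memb (by rw [T16a]; exact neg_mem memc)
      (by rw [s₁₆]; exact memu) (by rw [T16c]; exact neg_mem mema)
  have inv₂₃ : ∀ v ∈ V, A₂₃ v ∈ V :=
    inv_of A₂₃ (by rw [T23u]; exact neg_mem memc) (by rw [T23a]; exact memb)
      (by rw [T23b]; exact mema) (by rw [T23c]; exact neg_mem memu)
  -- kernel helper: an operator vanishing on the four generators vanishes on V
  have kerV : ∀ (D : H →L[ℂ] H), D Ψ = 0 → D (A₁₂ Ψ) = 0 → D (A₁₆ Ψ) = 0 →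
      D (A₁₂ (A₁₆ Ψ)) = 0 → ∀ v ∈ V, D v = 0 := by
    intro D h1 h2 h3 h4 v hv
    rw [hV] at hv
    have hle : Submodule.span ℂ ({Ψ, A₁₂ Ψ, A₁₆ Ψ, A₁₂ (A₁₆ Ψ)} : Set H)
        ≤ LinearMap.ker (D : H →ₗ[ℂ] H) := by
      rw [Submodule.span_le]
      rintro x (rfl | rfl | rfl | rfl) <;>
        simp [SetLike.mem_coe, LinearMap.mem_ker, ContinuousLinearMap.coe_coe, h1, h2, h3, h4]
    simpa using hle hv
  -- anticommutation of compressions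
  have comp_anti : ∀ (T S : H →L[ℂ] H), (∀ v ∈ V, T v ∈ V) → (∀ v ∈ V, S v ∈ V) →
      (∀ v ∈ V, T (S v) + S (T v) = 0) →
      (P ∘L T ∘L P) ∘L (P ∘L S ∘L P) + (P ∘L S ∘L P) ∘L (P ∘L T ∘L P) = 0 := by
    intro T S hT hS hanti
    ext x
    have hx : P x ∈ V := hPmem x
    have hSx : S (P x) ∈ V := hS _ hx
    have hTx : T (P x) ∈ V := hT _ hx
    simp only [ContinuousLinearMap.add_apply, ContinuousLinearMap.comp_apply,
      ContinuousLinearMap.zero_apply]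
    rw [hPfix _ (hPmem _), hPfix _ (hPmem _), hPfix _ hSx, hPfix _ hTx,
      hPfix _ (hT _ hSx), hPfix _ (hS _ hTx)]
    exact hanti _ hx
  have anti_of : ∀ (T S : H →L[ℂ] H),
      T (S Ψ) + S (T Ψ) = 0 → T (S (A₁₂ Ψ)) + S (T (A₁₂ Ψ)) = 0 →
      T (S (A₁₆ Ψ)) + S (T (A₁₆ Ψ)) = 0 → T (S (A₁₂ (A₁₆ Ψ))) + S (T (A₁₂ (A₁₆ Ψ))) = 0 →
      ∀ v ∈ V, T (S v) + S (T v) = 0 := by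
    intro T S h1 h2 h3 h4 v hv
    have := kerV (T ∘L S + S ∘L T) (by simpa using h1) (by simpa using h2)
      (by simpa using h3) (by simpa using h4) v hv
    simpa using this
  have anti₁ := comp_anti A₁₂ A₁₆ inv₁₂ inv₁₆ (anti_of A₁₂ A₁₆
    (by simp [T16a, T16c, T34u, T34a, T34b, T34c, T45u, T45a, T45b, T45c, T56u, T56a, T56b, T56c, T23u, T23a, T23b, T23c, s₁₂, s₁₆, map_neg, neg_neg])
    (by simp [T16a, T16c, T34u, T34a, T34b, T34c, T45u, T45a, T45b, T45c, T56u, T56a, T56b, T56c, T23u, T23a, T23b, T23c, s₁₂, s₁₆, map_neg, neg_neg])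
    (by simp [T16a, T16c, T34u, T34a, T34b, T34c, T45u, T45a, T45b, T45c, T56u, T56a, T56b, T56c, T23u, T23a, T23b, T23c, s₁₂, s₁₆, map_neg, neg_neg])
    (by simp [T16a, T16c, T34u, T34a, T34b, T34c, T45u, T45a, T45b, T45c, T56u, T56a, T56b, T56c, T23u, T23a, T23b, T23c, s₁₂, s₁₆, map_neg, neg_neg]))
  have anti₂ := comp_anti A₁₂ A₂₃ inv₁₂ inv₂₃ (anti_of A₁₂ A₂₃
    (by simp [T16a, T16c, T34u, T34a, T34b, T34c, T45u, T45a, T45b, T45c, T56u, T56a, T56b, T56c, T23u, T23a, T23b, T23c, s₁₂, s₁₆, map_neg, neg_neg])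
    (by simp [T16a, T16c, T34u, T34a, T34b, T34c, T45u, T45a, T45b, T45c, T56u, T56a, T56b, T56c, T23u, T23a, T23b, T23c, s₁₂, s₁₆, map_neg, neg_neg])
    (by simp [T16a, T16c, T34u, T34a, T34b, T34c, T45u, T45a, T45b, T45c, T56u, T56a, T56b, T56c, T23u, T23a, T23b, T23c, s₁₂, s₁₆, map_neg, neg_neg])
    (by simp [T16a, T16c, T34u, T34a, T34b, T34c, T45u, T45a, T45b, T45c, T56u, T56a, T56b, T56c, T23u, T23a, T23b, T23c, s₁₂, s₁₆, map_neg, neg_neg]))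
  have anti₃ := comp_anti A₂₃ A₃₄ inv₂₃ inv₃₄ (anti_of A₂₃ A₃₄
    (by simp [T16a, T16c, T34u, T34a, T34b, T34c, T45u, T45a, T45b, T45c, T56u, T56a, T56b, T56c, T23u, T23a, T23b, T23c, s₁₂, s₁₆, map_neg, neg_neg])
    (by simp [T16a, T16c, T34u, T34a, T34b, T34c, T45u, T45a, T45b, T45c, T56u, T56a, T56b, T56c, T23u, T23a, T23b, T23c, s₁₂, s₁₆, map_neg, neg_neg])
    (by simp [T16a, T16c, T34u, T34a, T34b, T34c, T45u, T45a, T45b, T45c, T56u, T56a, T56b, T56c, T23u, T23a, T23b, T23c, s₁₂, s₁₆, map_neg, neg_neg])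
    (by simp [T16a, T16c, T34u, T34a, T34b, T34c, T45u, T45a, T45b, T45c, T56u, T56a, T56b, T56c, T23u, T23a, T23b, T23c, s₁₂, s₁₆, map_neg, neg_neg]))
  have anti₄ := comp_anti A₃₄ A₄₅ inv₃₄ inv₄₅ (anti_of A₃₄ A₄₅
    (by simp [T16a, T16c, T34u, T34a, T34b, T34c, T45u, T45a, T45b, T45c, T56u, T56a, T56b, T56c, T23u, T23a, T23b, T23c, s₁₂, s₁₆, map_neg, neg_neg])
    (by simp [T16a, T16c, T34u, T34a, T34b, T34c, T45u, T45a, T45b, T45c, T56u, T56a, T56b, T56c, T23u, T23a, T23b, T23c, s₁₂, s₁₆, map_neg, neg_neg])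
    (by simp [T16a, T16c, T34u, T34a, T34b, T34c, T45u, T45a, T45b, T45c, T56u, T56a, T56b, T56c, T23u, T23a, T23b, T23c, s₁₂, s₁₆, map_neg, neg_neg])
    (by simp [T16a, T16c, T34u, T34a, T34b, T34c, T45u, T45a, T45b, T45c, T56u, T56a, T56b, T56c, T23u, T23a, T23b, T23c, s₁₂, s₁₆, map_neg, neg_neg]))
  have anti₅ := comp_anti A₄₅ A₅₆ inv₄₅ inv₅₆ (anti_of A₄₅ A₅₆
    (by simp [T16a, T16c, T34u, T34a, T34b, T34c, T45u, T45a, T45b, T45c, T56u, T56a, T56b, T56c, T23u, T23a, T23b, T23c, s₁₂, s₁₆, map_neg, neg_neg])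
    (by simp [T16a, T16c, T34u, T34a, T34b, T34c, T45u, T45a, T45b, T45c, T56u, T56a, T56b, T56c, T23u, T23a, T23b, T23c, s₁₂, s₁₆, map_neg, neg_neg])
    (by simp [T16a, T16c, T34u, T34a, T34b, T34c, T45u, T45a, T45b, T45c, T56u, T56a, T56b, T56c, T23u, T23a, T23b, T23c, s₁₂, s₁₆, map_neg, neg_neg])
    (by simp [T16a, T16c, T34u, T34a, T34b, T34c, T45u, T45a, T45b, T45c, T56u, T56a, T56b, T56c, T23u, T23a, T23b, T23c, s₁₂, s₁₆, map_neg, neg_neg]))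
  have anti₆ := comp_anti A₅₆ A₁₆ inv₅₆ inv₁₆ (anti_of A₅₆ A₁₆
    (by simp [T16a, T16c, T34u, T34a, T34b, T34c, T45u, T45a, T45b, T45c, T56u, T56a, T56b, T56c, T23u, T23a, T23b, T23c, s₁₂, s₁₆, map_neg, neg_neg])
    (by simp [T16a, T16c, T34u, T34a, T34b, T34c, T45u, T45a, T45b, T45c, T56u, T56a, T56b, T56c, T23u, T23a, T23b, T23c, s₁₂, s₁₆, map_neg, neg_neg])
    (by simp [T16a, T16c, T34u, T34a, T34b, T34c, T45u, T45a, T45b, T45c, T56u, T56a, T56b, T56c, T23u, T23a, T23b, T23c, s₁₂, s₁₆, map_neg, neg_neg])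
    (by simp [T16a, T16c, T34u, T34a, T34b, T34c, T45u, T45a, T45b, T45c, T56u, T56a, T56b, T56c, T23u, T23a, T23b, T23c, s₁₂, s₁₆, map_neg, neg_neg]))
  refine ⟨hfr, fun v hv => ⟨inv₁₂ v hv, inv₃₄ v hv, inv₅₆ v hv, inv₄₅ v hv, inv₁₆ v hv,
    inv₂₃ v hv⟩, ⟨anti₁, anti₂, anti₃, anti₄, anti₅, anti₆⟩, k₃, k₄⟩
end

section
/- Strong form of rigidity: suppose the six Hermitian involutions satisfy the nine commutation relations and the unit vector Ψ satisfies the ideal expectations ⟪Ψ, A₁₂(A₃₄(A₅₆ Ψ))⟫ = 1, ⟪Ψ, A₄₅(A₁₆(A₂₃ Ψ))⟫ = 1, ⟪Ψ, A₁₂(A₄₅ Ψ)⟫ = 1, ⟪Ψ, A₃₄(A₁₆ Ψ)⟫ = 1, ⟪Ψ, A₅₆(A₂₃ Ψ)⟫ = −1. Then there exists an orthonormal family b : Fin 2 × Fin 2 → H whose span equals V = span_ℂ {Ψ, A₁₂ Ψ, A₁₆ Ψ, A₁₂(A₁₆ Ψ)}, such that for all i, j ∈ Fin 2 (index arithmetic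 mod 2): A₁₂ b(i,j) = (−1)^i · b(i,j), A₄₅ b(i,j) = (−1)^j · b(i,j), A₁₆ b(i,j) = b(i+1, j), A₃₄ b(i,j) = b(i, j+1), A₅₆ b(i,j) = (−1)^i · b(i, j+1), A₂₃ b(i,j) = (−1)^j · b(i+1, j), and moreover Ψ = (b(0,0) + b(1,1)) / √2; i.e. in a suitable basis the operators act as the two-qubit Pauli operators Z⊗I, I⊗Z, X⊗I, I⊗X, Z⊗X, X⊗Z and Ψ is the Bell state. -/
/-!
Each expectation equal to `±1` between unit vectors forces, by the equality case of
Cauchy–Schwarz, an eigen-equation for `Ψ`. The rows give `A₅₆ Ψ = A₁₂ (A₃₄ Ψ)` and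
`A₂₃ Ψ = A₄₅ (A₁₆ Ψ)`, the first two columns give `A₄₅ Ψ = A₁₂ Ψ` and `A₁₆ Ψ = A₃₄ Ψ`, and the
sign `-1` of the third column makes `A₄₅` and `A₁₂` act with opposite signs on `A₃₄ Ψ`.

From a commuting row `(Z, Y, W)` with `W Ψ = Z (Y Ψ)` one builds the Bell-type vectors
`(Ψ ± Z Ψ)/√2`, `(Y Ψ ± Z (Y Ψ))/√2`, on which the row acts as `Z⊗I, I⊗X, Z⊗X`. The sign
relation says exactly that the vectors built from the second row are those built from the
first, with the two tensor factors swapped; so the second row acts as `I⊗Z, X⊗I, X⊗Z`.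
Orthonormality then comes from the eigenvalues of the self-adjoint `A₁₂, A₄₅`, and from
`A₃₄, A₁₆` permuting the vectors isometrically.
-/

open scoped InnerProductSpace

section

variable {𝕜 E : Type*} [RCLike 𝕜] [NormedAddCommGroup E] [InnerProductSpace 𝕜 E]

lemma Commute.apply_apply {A B : E →L[𝕜] E} (h : Commute A B) (x : E) : A (B x) = B (A x) :=
  DFunLike.congr_fun h.eq x

lemma apply_apply_of_mul_self_eq_one {A : E →L[𝕜] E} (h : A * A = 1) (x : E) : A (A x) = x :=
  DFunLike.congr_fun h x

variable [CompleteSpace E]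

lemma IsSelfAdjoint.norm_map_of_mul_self_eq_one {A : E →L[𝕜] E} (hA : IsSelfAdjoint A)
    (h : A * A = 1) (x : E) : ‖A x‖ = ‖x‖ :=
  ContinuousLinearMap.norm_map_of_mem_unitary
    (Unitary.mem_iff.mpr ⟨by rw [hA.star_eq, h], by rw [hA.star_eq, h]⟩) x

lemma IsSelfAdjoint.eq_apply_of_inner_eq_one {A : E →L[𝕜] E} (hA : IsSelfAdjoint A)
    (h : A * A = 1) {u x : E} (hu : ‖u‖ = 1) (hx : ‖x‖ = 1) (hux : ⟪u, A x⟫_𝕜 = 1) : x = A u := by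
  have hAx : u = A x := (inner_eq_one_iff_of_norm_eq_one hu
    (by rw [hA.norm_map_of_mul_self_eq_one h, hx])).mp hux
  rw [hAx, apply_apply_of_mul_self_eq_one h]

lemma IsSelfAdjoint.eq_apply_apply_of_inner_eq_one {Z Y W : E →L[𝕜] E} (hZ : IsSelfAdjoint Z)
    (hZ₂ : Z * Z = 1) (hY₂ : Y * Y = 1) (hZY : Commute Z Y) {u : E} (hu : ‖u‖ = 1)
    (hYW : ‖Y (W u)‖ = 1) (h : ⟪u, Z (Y (W u))⟫_𝕜 = 1) : W u = Z (Y u) := by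
  rw [hZY.apply_apply, ← hZ.eq_apply_of_inner_eq_one hZ₂ hu hYW h,
    apply_apply_of_mul_self_eq_one hY₂]

lemma IsSelfAdjoint.inner_eq_zero_of_apply_eq_smul {T : E →L[𝕜] E} (hT : IsSelfAdjoint T)
    {u v : E} {μ ν : 𝕜} (hu : T u = μ • u) (hv : T v = ν • v) (hμν : μ ≠ ν) : ⟪u, v⟫_𝕜 = 0 :=
  hT.isSymmetric.orthogonalFamily_eigenspaces hμν ⟨u, Module.End.mem_eigenspace_iff.mpr hu⟩
    ⟨v, Module.End.mem_eigenspace_iff.mpr hv⟩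

end

lemma neg_one_pow_ne_neg_one_pow {i k : Fin 2} (h : i ≠ k) :
    (-1 : ℂ) ^ (i : ℕ) ≠ (-1) ^ (k : ℕ) := by
  revert h
  fin_cases i <;> fin_cases k <;> norm_num

lemma inv_sqrt_two_mul_inv_sqrt_two : (Real.sqrt 2 : ℂ)⁻¹ * (Real.sqrt 2 : ℂ)⁻¹ = 2⁻¹ := by
  rw [← mul_inv, ← Complex.ofReal_mul, Real.mul_self_sqrt zero_le_two]
  norm_num

section Pauli

variable {E : Type*} [NormedAddCommGroup E] [InnerProductSpace ℂ E]

theorem orthonormal_of_pauli_action [CompleteSpace E] {b : Fin 2 × Fin 2 → E}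
    {Z Z' Y Y' : E →L[ℂ] E}
    (hZ : IsSelfAdjoint Z) (hZ' : IsSelfAdjoint Z') (hY : ∀ x, ‖Y x‖ = ‖x‖)
    (hY' : ∀ x, ‖Y' x‖ = ‖x‖)
    (hZb : ∀ i j, Z (b (i, j)) = (-1 : ℂ) ^ (i : ℕ) • b (i, j))
    (hZ'b : ∀ i j, Z' (b (i, j)) = (-1 : ℂ) ^ (j : ℕ) • b (i, j))
    (hYb : ∀ i j, Y (b (i, j)) = b (i, j + 1)) (hY'b : ∀ i j, Y' (b (i, j)) = b (i + 1, j))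
    (hbell : ‖(Real.sqrt 2 : ℂ)⁻¹ • (b (0, 0) + b (1, 1))‖ = 1) : Orthonormal ℂ b := by
  have orth : Pairwise fun p q => ⟪b p, b q⟫_ℂ = 0 := by
    rintro ⟨i, j⟩ ⟨k, l⟩ hne
    by_cases hik : i = k
    · subst hik
      exact hZ'.inner_eq_zero_of_apply_eq_smul (hZ'b i j) (hZ'b i l)
        (neg_one_pow_ne_neg_one_pow fun h => hne (by rw [h]))
    · exact hZ.inner_eq_zero_of_apply_eq_smul (hZb i j) (hZb k l) (neg_one_pow_ne_neg_one_pow hik)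
  have norm_succ_right : ∀ i j, ‖b (i, j + 1)‖ = ‖b (i, j)‖ := fun i j => by rw [← hYb, hY]
  have norm_succ_left : ∀ i j, ‖b (i + 1, j)‖ = ‖b (i, j)‖ := fun i j => by rw [← hY'b, hY']
  have norm_eq : ∀ p, ‖b p‖ = ‖b (0, 0)‖ := by
    rintro ⟨i, j⟩
    fin_cases i <;> fin_cases j
    · rfl
    · exact norm_succ_right 0 0
    · exact norm_succ_left 0 0
    · exact (norm_succ_left 0 1).trans (norm_succ_right 0 0)
  have sum_sq : ‖b (0, 0) + b (1, 1)‖ ^ 2 = 2 * ‖b (0, 0)‖ ^ 2 := by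
    rw [sq, norm_add_sq_eq_norm_sq_add_norm_sq_of_inner_eq_zero _ _ (orth (by decide)),
      norm_eq (1, 1)]
    ring
  rw [norm_smul, norm_inv, Complex.norm_real, Real.norm_of_nonneg (Real.sqrt_nonneg 2),
    inv_mul_eq_one₀ (by positivity)] at hbell
  rw [← hbell, Real.sq_sqrt zero_le_two] at sum_sq
  have norm_one : ‖b (0, 0)‖ = 1 :=
    (pow_eq_one_iff_of_nonneg (norm_nonneg _) two_ne_zero).mp (by linarith)
  exact ⟨fun p => (norm_eq p).trans norm_one, orth⟩

/-- When `Z`, `Y` are `Z ⊗ I`, `I ⊗ X` and `Ψ` is the Bell state, this is the computational basis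
`|ij⟩`. -/
noncomputable def bellBasis (Z Y : E →L[ℂ] E) (Ψ : E) (p : Fin 2 × Fin 2) : E :=
  (Real.sqrt 2 : ℂ)⁻¹ • ![![Ψ + Z Ψ, Y Ψ + Z (Y Ψ)], ![Y Ψ - Z (Y Ψ), Ψ - Z Ψ]] p.1 p.2

variable {Z Y : E →L[ℂ] E} {Ψ : E}

lemma inv_sqrt_two_smul_bellBasis_add :
    (Real.sqrt 2 : ℂ)⁻¹ • (bellBasis Z Y Ψ (0, 0) + bellBasis Z Y Ψ (1, 1)) = Ψ := by
  simp only [bellBasis, Matrix.cons_val_zero, Matrix.cons_val_one, ← smul_add, smul_smul,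
    inv_sqrt_two_mul_inv_sqrt_two]
  module

lemma span_range_bellBasis :
    Submodule.span ℂ (Set.range (bellBasis Z Y Ψ)) =
      Submodule.span ℂ {Ψ, Z Ψ, Y Ψ, Z (Y Ψ)} := by
  set b := bellBasis Z Y Ψ with hb
  apply le_antisymm
  · rw [Submodule.span_le]
    rintro _ ⟨⟨i, j⟩, rfl⟩
    have mem : ∀ x ∈ ({Ψ, Z Ψ, Y Ψ, Z (Y Ψ)} : Set E),
        x ∈ Submodule.span ℂ {Ψ, Z Ψ, Y Ψ, Z (Y Ψ)} := fun x hx => Submodule.subset_span hx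
    fin_cases i <;> fin_cases j <;> refine Submodule.smul_mem _ _ ?_
    · exact add_mem (mem _ (by simp)) (mem _ (by simp))
    · exact add_mem (mem _ (by simp)) (mem _ (by simp))
    · exact sub_mem (mem _ (by simp)) (mem _ (by simp))
    · exact sub_mem (mem _ (by simp)) (mem _ (by simp))
  · have mem : ∀ p, b p ∈ Submodule.span ℂ (Set.range b) := fun p => Submodule.subset_span ⟨p, rfl⟩
    have hΨ : Ψ = (Real.sqrt 2 : ℂ)⁻¹ • (b (0, 0) + b (1, 1)) :=
      inv_sqrt_two_smul_bellBasis_add.symm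
    have hZΨ : Z Ψ = (Real.sqrt 2 : ℂ)⁻¹ • (b (0, 0) - b (1, 1)) := by
      simp only [hb, bellBasis, Matrix.cons_val_zero, Matrix.cons_val_one, ← smul_sub, smul_smul,
        inv_sqrt_two_mul_inv_sqrt_two]
      module
    have hYΨ : Y Ψ = (Real.sqrt 2 : ℂ)⁻¹ • (b (0, 1) + b (1, 0)) := by
      simp only [hb, bellBasis, Matrix.cons_val_zero, Matrix.cons_val_one, ← smul_add, smul_smul,
        inv_sqrt_two_mul_inv_sqrt_two]
      module
    have hZYΨ : Z (Y Ψ) = (Real.sqrt 2 : ℂ)⁻¹ • (b (0, 1) - b (1, 0)) := by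
      simp only [hb, bellBasis, Matrix.cons_val_zero, Matrix.cons_val_one, ← smul_sub, smul_smul,
        inv_sqrt_two_mul_inv_sqrt_two]
      module
    rw [Submodule.span_le]
    rintro x (rfl | rfl | rfl | rfl)
    · rw [hΨ]; exact Submodule.smul_mem _ _ (add_mem (mem _) (mem _))
    · rw [hZΨ]; exact Submodule.smul_mem _ _ (sub_mem (mem _) (mem _))
    · rw [hYΨ]; exact Submodule.smul_mem _ _ (add_mem (mem _) (mem _))
    · rw [hZYΨ]; exact Submodule.smul_mem _ _ (sub_mem (mem _) (mem _))

lemma map_bellBasis_left (hZ : Z * Z = 1) (i j : Fin 2) :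
    Z (bellBasis Z Y Ψ (i, j)) = (-1 : ℂ) ^ (i : ℕ) • bellBasis Z Y Ψ (i, j) := by
  fin_cases i <;> fin_cases j <;> simp [bellBasis, apply_apply_of_mul_self_eq_one hZ] <;> module

lemma map_bellBasis_right (hY : Y * Y = 1) (hZY : Commute Z Y) (i j : Fin 2) :
    Y (bellBasis Z Y Ψ (i, j)) = bellBasis Z Y Ψ (i, j + 1) := by
  fin_cases i <;> fin_cases j <;>
    simp [bellBasis, apply_apply_of_mul_self_eq_one hY, hZY.apply_apply]

lemma map_bellBasis_of_commute {W : E →L[ℂ] E} (hZ : Z * Z = 1) (hY : Y * Y = 1)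
    (hZY : Commute Z Y) (hZW : Commute Z W) (hYW : Commute Y W) (hW : W Ψ = Z (Y Ψ))
    (i j : Fin 2) :
    W (bellBasis Z Y Ψ (i, j)) = (-1 : ℂ) ^ (i : ℕ) • bellBasis Z Y Ψ (i, j + 1) := by
  have hWY : W (Y Ψ) = Z Ψ := by
    rw [← hYW.apply_apply, hW, ← hZY.apply_apply, apply_apply_of_mul_self_eq_one hY]
  fin_cases i <;> fin_cases j <;>
    simp [bellBasis, ← hZW.apply_apply, hW, hWY, apply_apply_of_mul_self_eq_one hZ] <;> module

lemma bellBasis_transpose {Z' Y' : E →L[ℂ] E} (hZ : Z' Ψ = Z Ψ) (hY : Y' Ψ = Y Ψ)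
    (hZY : Z' (Y' Ψ) = -Z (Y Ψ)) (i j : Fin 2) :
    bellBasis Z' Y' Ψ (j, i) = bellBasis Z Y Ψ (i, j) := by
  fin_cases i <;> fin_cases j <;> simp only [bellBasis, hZY] <;> simp [hZ, hY, sub_eq_add_neg]

end Pauli

theorem strong_rigidity_of_majorana_parities_general
    {H : Type*} [NormedAddCommGroup H] [InnerProductSpace ℂ H] [CompleteSpace H]
    (A₁₂ A₃₄ A₅₆ A₄₅ A₁₆ A₂₃ : H →L[ℂ] H)
    (h₁₂ : IsSelfAdjoint A₁₂) (h₃₄ : IsSelfAdjoint A₃₄) (h₅₆ : IsSelfAdjoint A₅₆)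
    (h₄₅ : IsSelfAdjoint A₄₅) (h₁₆ : IsSelfAdjoint A₁₆) (h₂₃ : IsSelfAdjoint A₂₃)
    (hi₁₂ : A₁₂ ∘L A₁₂ = 1) (hi₃₄ : A₃₄ ∘L A₃₄ = 1) (hi₅₆ : A₅₆ ∘L A₅₆ = 1)
    (hi₄₅ : A₄₅ ∘L A₄₅ = 1) (hi₁₆ : A₁₆ ∘L A₁₆ = 1) (hi₂₃ : A₂₃ ∘L A₂₃ = 1)
    (c₁ : A₁₂ ∘L A₃₄ = A₃₄ ∘L A₁₂) (c₂ : A₁₂ ∘L A₅₆ = A₅₆ ∘L A₁₂)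
    (c₃ : A₃₄ ∘L A₅₆ = A₅₆ ∘L A₃₄) (c₄ : A₄₅ ∘L A₁₆ = A₁₆ ∘L A₄₅)
    (c₅ : A₄₅ ∘L A₂₃ = A₂₃ ∘L A₄₅) (c₆ : A₁₆ ∘L A₂₃ = A₂₃ ∘L A₁₆)
    (Ψ : H) (hΨ : ‖Ψ‖ = 1)
    (e₁ : ⟪Ψ, A₁₂ (A₃₄ (A₅₆ Ψ))⟫_ℂ = 1) (e₂ : ⟪Ψ, A₄₅ (A₁₆ (A₂₃ Ψ))⟫_ℂ = 1)
    (e₃ : ⟪Ψ, A₁₂ (A₄₅ Ψ)⟫_ℂ = 1) (e₄ : ⟪Ψ, A₃₄ (A₁₆ Ψ)⟫_ℂ = 1)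
    (e₅ : ⟪Ψ, A₅₆ (A₂₃ Ψ)⟫_ℂ = -1) :
    ∃ b : Fin 2 × Fin 2 → H,
      Orthonormal ℂ b ∧
      Submodule.span ℂ (Set.range b) =
        Submodule.span ℂ ({Ψ, A₁₂ Ψ, A₁₆ Ψ, A₁₂ (A₁₆ Ψ)} : Set H) ∧
      (∀ i j : Fin 2,
        A₁₂ (b (i, j)) = ((-1 : ℂ) ^ (i : ℕ)) • b (i, j) ∧
        A₄₅ (b (i, j)) = ((-1 : ℂ) ^ (j : ℕ)) • b (i, j) ∧
        A₁₆ (b (i, j)) = b (i + 1, j) ∧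
        A₃₄ (b (i, j)) = b (i, j + 1) ∧
        A₅₆ (b (i, j)) = ((-1 : ℂ) ^ (i : ℕ)) • b (i, j + 1) ∧
        A₂₃ (b (i, j)) = ((-1 : ℂ) ^ (j : ℕ)) • b (i + 1, j)) ∧
      Ψ = ((Real.sqrt 2 : ℂ))⁻¹ • (b (0, 0) + b (1, 1)) := by
  have n₃₄ := h₃₄.norm_map_of_mul_self_eq_one hi₃₄
  have n₅₆ := h₅₆.norm_map_of_mul_self_eq_one hi₅₆
  have n₄₅ := h₄₅.norm_map_of_mul_self_eq_one hi₄₅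
  have n₁₆ := h₁₆.norm_map_of_mul_self_eq_one hi₁₆
  have n₂₃ := h₂₃.norm_map_of_mul_self_eq_one hi₂₃
  have r₁ : A₅₆ Ψ = A₁₂ (A₃₄ Ψ) :=
    h₁₂.eq_apply_apply_of_inner_eq_one hi₁₂ hi₃₄ c₁ hΨ (by rw [n₃₄, n₅₆, hΨ]) e₁
  have r₂ : A₂₃ Ψ = A₄₅ (A₁₆ Ψ) :=
    h₄₅.eq_apply_apply_of_inner_eq_one hi₄₅ hi₁₆ c₄ hΨ (by rw [n₁₆, n₂₃, hΨ]) e₂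
  have r₃ : A₄₅ Ψ = A₁₂ Ψ := h₁₂.eq_apply_of_inner_eq_one hi₁₂ hΨ ((n₄₅ Ψ).trans hΨ) e₃
  have r₄ : A₁₆ Ψ = A₃₄ Ψ := h₃₄.eq_apply_of_inner_eq_one hi₃₄ hΨ ((n₁₆ Ψ).trans hΨ) e₄
  have r₅ : A₂₃ Ψ = -A₅₆ Ψ := neg_eq_iff_eq_neg.mp <| h₅₆.eq_apply_of_inner_eq_one hi₅₆ hΨ
    (by rw [norm_neg, n₂₃, hΨ]) (by rw [map_neg, inner_neg_right, e₅, neg_neg])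
  set b := bellBasis A₁₂ A₃₄ Ψ
  have transpose : ∀ i j, bellBasis A₄₅ A₁₆ Ψ (j, i) = b (i, j) :=
    bellBasis_transpose r₃ r₄ (by rw [← r₂, r₅, r₁])
  have a₁₂ := map_bellBasis_left (Y := A₃₄) (Ψ := Ψ) hi₁₂
  have a₃₄ := map_bellBasis_right (Ψ := Ψ) hi₃₄ c₁
  have a₅₆ := map_bellBasis_of_commute hi₁₂ hi₃₄ c₁ c₂ c₃ r₁
  have a₄₅ : ∀ i j, A₄₅ (b (i, j)) = (-1 : ℂ) ^ (j : ℕ) • b (i, j) := fun i j => by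
    rw [← transpose]; exact map_bellBasis_left hi₄₅ j i
  have a₁₆ : ∀ i j, A₁₆ (b (i, j)) = b (i + 1, j) := fun i j => by
    rw [← transpose, ← transpose]; exact map_bellBasis_right hi₁₆ c₄ j i
  have a₂₃ : ∀ i j, A₂₃ (b (i, j)) = (-1 : ℂ) ^ (j : ℕ) • b (i + 1, j) := fun i j => by
    rw [← transpose, ← transpose]; exact map_bellBasis_of_commute hi₄₅ hi₁₆ c₄ c₅ c₆ r₂ j i
  refine ⟨b, orthonormal_of_pauli_action h₁₂ h₄₅ n₃₄ n₁₆ a₁₂ a₄₅ a₃₄ a₁₆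
      (by rw [inv_sqrt_two_smul_bellBasis_add, hΨ]), by rw [span_range_bellBasis, r₄],
    fun i j => ⟨a₁₂ i j, a₄₅ i j, a₁₆ i j, a₃₄ i j, a₅₆ i j, a₂₃ i j⟩,
    inv_sqrt_two_smul_bellBasis_add.symm⟩

/-- **Strong form of rigidity.** If the ideal expectations hold exactly, then there is an
orthonormal basis `b` of `V = span {Ψ, A₁₂ Ψ, A₁₆ Ψ, A₁₂ (A₁₆ Ψ)}`, indexed by
`Fin 2 × Fin 2`, in which the six operators act as the two-qubit Pauli operators
`Z⊗I, I⊗Z, X⊗I, I⊗X, Z⊗X, X⊗Z`, and `Ψ` is the Bell state `(b(0,0) + b(1,1))/√2`. -/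
theorem strong_rigidity_of_majorana_parities
    {H : Type*} [NormedAddCommGroup H] [InnerProductSpace ℂ H] [CompleteSpace H]
    (A₁₂ A₃₄ A₅₆ A₄₅ A₁₆ A₂₃ : H →L[ℂ] H)
    (h₁₂ : IsSelfAdjoint A₁₂) (h₃₄ : IsSelfAdjoint A₃₄) (h₅₆ : IsSelfAdjoint A₅₆)
    (h₄₅ : IsSelfAdjoint A₄₅) (h₁₆ : IsSelfAdjoint A₁₆) (h₂₃ : IsSelfAdjoint A₂₃)
    (hi₁₂ : A₁₂ ∘L A₁₂ = 1) (hi₃₄ : A₃₄ ∘L A₃₄ = 1) (hi₅₆ : A₅₆ ∘L A₅₆ = 1)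
    (hi₄₅ : A₄₅ ∘L A₄₅ = 1) (hi₁₆ : A₁₆ ∘L A₁₆ = 1) (hi₂₃ : A₂₃ ∘L A₂₃ = 1)
    (c₁ : A₁₂ ∘L A₃₄ = A₃₄ ∘L A₁₂) (c₂ : A₁₂ ∘L A₅₆ = A₅₆ ∘L A₁₂)
    (c₃ : A₃₄ ∘L A₅₆ = A₅₆ ∘L A₃₄) (c₄ : A₄₅ ∘L A₁₆ = A₁₆ ∘L A₄₅)
    (c₅ : A₄₅ ∘L A₂₃ = A₂₃ ∘L A₄₅) (c₆ : A₁₆ ∘L A₂₃ = A₂₃ ∘L A₁₆)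
    (c₇ : A₁₂ ∘L A₄₅ = A₄₅ ∘L A₁₂) (c₈ : A₃₄ ∘L A₁₆ = A₁₆ ∘L A₃₄)
    (c₉ : A₅₆ ∘L A₂₃ = A₂₃ ∘L A₅₆)
    (Ψ : H) (hΨ : ‖Ψ‖ = 1)
    (e₁ : ⟪Ψ, A₁₂ (A₃₄ (A₅₆ Ψ))⟫_ℂ = 1) (e₂ : ⟪Ψ, A₄₅ (A₁₆ (A₂₃ Ψ))⟫_ℂ = 1)
    (e₃ : ⟪Ψ, A₁₂ (A₄₅ Ψ)⟫_ℂ = 1) (e₄ : ⟪Ψ, A₃₄ (A₁₆ Ψ)⟫_ℂ = 1)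
    (e₅ : ⟪Ψ, A₅₆ (A₂₃ Ψ)⟫_ℂ = -1) :
    ∃ b : Fin 2 × Fin 2 → H,
      Orthonormal ℂ b ∧
      Submodule.span ℂ (Set.range b) =
        Submodule.span ℂ ({Ψ, A₁₂ Ψ, A₁₆ Ψ, A₁₂ (A₁₆ Ψ)} : Set H) ∧
      (∀ i j : Fin 2,
        A₁₂ (b (i, j)) = ((-1 : ℂ) ^ (i : ℕ)) • b (i, j) ∧
        A₄₅ (b (i, j)) = ((-1 : ℂ) ^ (j : ℕ)) • b (i, j) ∧
        A₁₆ (b (i, j)) = b (i + 1, j) ∧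
        A₃₄ (b (i, j)) = b (i, j + 1) ∧
        A₅₆ (b (i, j)) = ((-1 : ℂ) ^ (i : ℕ)) • b (i, j + 1) ∧
        A₂₃ (b (i, j)) = ((-1 : ℂ) ^ (j : ℕ)) • b (i + 1, j)) ∧
      Ψ = ((Real.sqrt 2 : ℂ))⁻¹ • (b (0, 0) + b (1, 1)) :=
  strong_rigidity_of_majorana_parities_general A₁₂ A₃₄ A₅₆ A₄₅ A₁₆ A₂₃ h₁₂ h₃₄ h₅₆ h₄₅ h₁₆ h₂₃ hi₁₂
    hi₃₄ hi₅₆ hi₄₅ hi₁₆ hi₂₃ c₁ c₂ c₃ c₄ c₅ c₆ Ψ hΨ e₁ e₂ e₃ e₄ e₅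
end

section
/- Approximate anti-commutativity: let ε ≥ 0 and suppose the six Hermitian involutions satisfy the nine commutation relations and the unit vector Ψ satisfies the ideal expectations within error ε: re⟪Ψ, A₁₂(A₃₄(A₅₆ Ψ))⟫ ≥ 1−ε, re⟪Ψ, A₄₅(A₁₆(A₂₃ Ψ))⟫ ≥ 1−ε, re⟪Ψ, A₁₂(A₄₅ Ψ)⟫ ≥ 1−ε, re⟪Ψ, A₃₄(A₁₆ Ψ)⟫ ≥ 1−ε, −re⟪Ψ, A₅₆(A₂₃ Ψ)⟫ ≥ 1−ε. Then for every adjacent pair (A_r, A_s) among (A₁₂,A₁₆), (A₁₂,A₂₃), (A₂₃,A₃₄), (A₃₄,A₄₅), (A₄₅,A₅₆), (A₅₆,A₁₆), one has ‖A_r(A_s Ψ) + A_s(A_r Ψ)‖ ≤ 5·√(2ε). -/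
/-!
The unit vector `Ψ` is almost fixed by the unitaries `A₁₂A₃₄A₅₆`, `A₄₅A₁₆A₂₃`, `A₁₂A₄₅`, `A₃₄A₁₆`
and `-A₅₆A₂₃`, each with displacement `‖gΨ - Ψ‖ ≤ √(2ε)`. Displacement is subadditive and
invariant under inversion, and for an adjacent pair `(r, s)` the operator `-(sr)⁻¹(rs)` is a
product of five of these almost-stabilisers and their inverses, which gives `‖rsΨ + srΨ‖ ≤ 5√(2ε)`.
-/

open scoped InnerProductSpace

section IsometricAction

variable {G X : Type*} [Group G] [PseudoMetricSpace X] [MulAction G X] [IsIsometricSMul G X]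

theorem dist_smul_smul_eq_dist_inv_mul_smul (g h : G) (x : X) :
    dist (g • x) (h • x) = dist ((h⁻¹ * g) • x) x := by
  rw [← dist_smul h⁻¹, smul_smul, inv_smul_smul]

theorem dist_inv_smul_self (g : G) (x : X) : dist (g⁻¹ • x) x = dist (g • x) x := by
  rw [← dist_smul g, smul_inv_smul, dist_comm]

theorem dist_mul_smul_self_le (g h : G) (x : X) :
    dist ((g * h) • x) x ≤ dist (g • x) x + dist (h • x) x := by
  calc dist ((g * h) • x) x ≤ dist ((g * h) • x) (g • x) + dist (g • x) x := dist_triangle _ _ _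
    _ = dist (h • x) x + dist (g • x) x := by rw [mul_smul, dist_smul]
    _ = _ := add_comm _ _

end IsometricAction

section MagicRectangle

variable {G X : Type*} [Group G] [HasDistribNeg G] [PseudoMetricSpace X] [MulAction G X]

/-- An approximate 2 × 3 magic rectangle `[[a, b, c], [d, e, f]]`: the error of each row and
column relation is the displacement of `x`. -/
structure IsApproxMagicRectangle (x : X) (δ : ℝ) (a b c d e f : G) : Prop where
  mul_self_a : a * a = 1
  mul_self_b : b * b = 1
  mul_self_c : c * c = 1
  mul_self_d : d * d = 1
  mul_self_e : e * e = 1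
  mul_self_f : f * f = 1
  commute_ab : Commute a b
  commute_ac : Commute a c
  commute_bc : Commute b c
  commute_de : Commute d e
  commute_df : Commute d f
  commute_ef : Commute e f
  dist_row₁ : dist ((a * b * c) • x) x ≤ δ
  dist_row₂ : dist ((-(d * e * f)) • x) x ≤ δ
  dist_col₁ : dist ((a * d) • x) x ≤ δ
  dist_col₂ : dist ((b * e) • x) x ≤ δ
  dist_col₃ : dist ((c * f) • x) x ≤ δ

namespace IsApproxMagicRectangle

variable {x : X} {δ : ℝ} {a b c d e f : G}

theorem swap₁₂ (h : IsApproxMagicRectangle x δ a b c d e f) :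
    IsApproxMagicRectangle x δ b a c e d f where
  mul_self_a := h.mul_self_b
  mul_self_b := h.mul_self_a
  mul_self_c := h.mul_self_c
  mul_self_d := h.mul_self_e
  mul_self_e := h.mul_self_d
  mul_self_f := h.mul_self_f
  commute_ab := h.commute_ab.symm
  commute_ac := h.commute_bc
  commute_bc := h.commute_ac
  commute_de := h.commute_de.symm
  commute_df := h.commute_ef
  commute_ef := h.commute_df
  dist_row₁ := h.commute_ab.eq ▸ h.dist_row₁
  dist_row₂ := h.commute_de.eq ▸ h.dist_row₂
  dist_col₁ := h.dist_col₂
  dist_col₂ := h.dist_col₁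
  dist_col₃ := h.dist_col₃

theorem swap₂₃ (h : IsApproxMagicRectangle x δ a b c d e f) :
    IsApproxMagicRectangle x δ a c b d f e where
  mul_self_a := h.mul_self_a
  mul_self_b := h.mul_self_c
  mul_self_c := h.mul_self_b
  mul_self_d := h.mul_self_d
  mul_self_e := h.mul_self_f
  mul_self_f := h.mul_self_e
  commute_ab := h.commute_ac
  commute_ac := h.commute_ab
  commute_bc := h.commute_bc.symm
  commute_de := h.commute_df
  commute_df := h.commute_de
  commute_ef := h.commute_ef.symm
  dist_row₁ := by simpa only [mul_assoc, h.commute_bc.eq] using h.dist_row₁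
  dist_row₂ := by simpa only [mul_assoc, h.commute_ef.eq] using h.dist_row₂
  dist_col₁ := h.dist_col₁
  dist_col₂ := h.dist_col₃
  dist_col₃ := h.dist_col₂

theorem inv_neg_mul_mul_eq (h : IsApproxMagicRectangle x δ a b c d e f) :
    (-(e * a))⁻¹ * (a * e) = a * d * -(d * e * f) * (c * f)⁻¹ * (a * b * c)⁻¹ * (b * e) := by
  have inv_eq {g : G} (hg : g * g = 1) : g⁻¹ = g := inv_eq_of_mul_eq_one_right hg
  have cancel {g : G} (hg : g * g = 1) (y : G) : g * (g * y) = y := by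
    rw [← mul_assoc, hg, one_mul]
  simp only [inv_neg, mul_inv_rev, inv_eq h.mul_self_a, inv_eq h.mul_self_b, inv_eq h.mul_self_c,
    inv_eq h.mul_self_e, neg_mul, mul_neg, mul_assoc, cancel h.mul_self_d, mul_inv_cancel_left,
    cancel h.mul_self_c, h.commute_ab.symm.left_comm, cancel h.mul_self_b]

theorem dist_mul_smul_neg_mul_smul_le [IsIsometricSMul G X]
    (h : IsApproxMagicRectangle x δ a b c d e f) :
    dist ((a * e) • x) ((-(e * a)) • x) ≤ 5 * δ := by
  rw [dist_smul_smul_eq_dist_inv_mul_smul, h.inv_neg_mul_mul_eq]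
  grw [dist_mul_smul_self_le, dist_mul_smul_self_le, dist_mul_smul_self_le,
    dist_mul_smul_self_le, dist_inv_smul_self, dist_inv_smul_self]
  linarith [h.dist_col₁, h.dist_row₂, h.dist_col₃, h.dist_row₁, h.dist_col₂]

end IsApproxMagicRectangle

end MagicRectangle

theorem IsSelfAdjoint.mem_unitary_of_mul_self {R : Type*} [Monoid R] [StarMul R] {u : R}
    (hu : IsSelfAdjoint u) (h : u * u = 1) : u ∈ unitary R :=
  Unitary.mem_iff.2 ⟨by rw [hu.star_eq, h], by rw [hu.star_eq, h]⟩

namespace Unitary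

variable {𝕜 H : Type*} [RCLike 𝕜] [NormedAddCommGroup H] [InnerProductSpace 𝕜 H] [CompleteSpace H]

instance : IsIsometricSMul (unitary (H →L[𝕜] H)) H :=
  ⟨fun u => (linearIsometryEquiv u).isometry⟩

theorem dist_smul_self_le_sqrt (u : unitary (H →L[𝕜] H)) {x : H} {ε : ℝ} (hx : ‖x‖ = 1)
    (h : 1 - ε ≤ RCLike.re ⟪x, (u : H →L[𝕜] H) x⟫_𝕜) : dist (u • x) x ≤ √(2 * ε) := by
  change dist ((u : H →L[𝕜] H) x) x ≤ _
  refine Real.le_sqrt_of_sq_le ?_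
  rw [dist_comm, dist_eq_norm, norm_sub_sq (𝕜 := 𝕜), norm_map, hx]
  linarith

theorem dist_mul_smul_neg_mul_smul (u v : unitary (H →L[𝕜] H)) (x : H) :
    dist ((u * v) • x) ((-(v * u)) • x) =
      ‖(u : H →L[𝕜] H) ((v : H →L[𝕜] H) x) + (v : H →L[𝕜] H) ((u : H →L[𝕜] H) x)‖ := by
  rw [dist_eq_norm, ← sub_neg_eq_add]
  rfl

end Unitary

theorem approximate_anticommutativity_general
    {H : Type*} [NormedAddCommGroup H] [InnerProductSpace ℂ H] [CompleteSpace H]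
    (A₁₂ A₃₄ A₅₆ A₄₅ A₁₆ A₂₃ : H →L[ℂ] H)
    (h₁₂ : IsSelfAdjoint A₁₂) (h₃₄ : IsSelfAdjoint A₃₄) (h₅₆ : IsSelfAdjoint A₅₆)
    (h₄₅ : IsSelfAdjoint A₄₅) (h₁₆ : IsSelfAdjoint A₁₆) (h₂₃ : IsSelfAdjoint A₂₃)
    (hi₁₂ : A₁₂ ∘L A₁₂ = 1) (hi₃₄ : A₃₄ ∘L A₃₄ = 1) (hi₅₆ : A₅₆ ∘L A₅₆ = 1)
    (hi₄₅ : A₄₅ ∘L A₄₅ = 1) (hi₁₆ : A₁₆ ∘L A₁₆ = 1) (hi₂₃ : A₂₃ ∘L A₂₃ = 1)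
    (c₁ : A₁₂ ∘L A₃₄ = A₃₄ ∘L A₁₂) (c₂ : A₁₂ ∘L A₅₆ = A₅₆ ∘L A₁₂)
    (c₃ : A₃₄ ∘L A₅₆ = A₅₆ ∘L A₃₄) (c₄ : A₄₅ ∘L A₁₆ = A₁₆ ∘L A₄₅)
    (c₅ : A₄₅ ∘L A₂₃ = A₂₃ ∘L A₄₅) (c₆ : A₁₆ ∘L A₂₃ = A₂₃ ∘L A₁₆)
    (Ψ : H) (hΨ : ‖Ψ‖ = 1) (ε : ℝ)
    -- ideal expectations within error ε
    (e₁ : 1 - ε ≤ RCLike.re ⟪Ψ, A₁₂ (A₃₄ (A₅₆ Ψ))⟫_ℂ)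
    (e₂ : 1 - ε ≤ RCLike.re ⟪Ψ, A₄₅ (A₁₆ (A₂₃ Ψ))⟫_ℂ)
    (e₃ : 1 - ε ≤ RCLike.re ⟪Ψ, A₁₂ (A₄₅ Ψ)⟫_ℂ)
    (e₄ : 1 - ε ≤ RCLike.re ⟪Ψ, A₃₄ (A₁₆ Ψ)⟫_ℂ)
    (e₅ : 1 - ε ≤ -RCLike.re ⟪Ψ, A₅₆ (A₂₃ Ψ)⟫_ℂ) :
    ‖A₁₂ (A₁₆ Ψ) + A₁₆ (A₁₂ Ψ)‖ ≤ 5 * Real.sqrt (2 * ε) ∧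
    ‖A₁₂ (A₂₃ Ψ) + A₂₃ (A₁₂ Ψ)‖ ≤ 5 * Real.sqrt (2 * ε) ∧
    ‖A₂₃ (A₃₄ Ψ) + A₃₄ (A₂₃ Ψ)‖ ≤ 5 * Real.sqrt (2 * ε) ∧
    ‖A₃₄ (A₄₅ Ψ) + A₄₅ (A₃₄ Ψ)‖ ≤ 5 * Real.sqrt (2 * ε) ∧
    ‖A₄₅ (A₅₆ Ψ) + A₅₆ (A₄₅ Ψ)‖ ≤ 5 * Real.sqrt (2 * ε) ∧
    ‖A₅₆ (A₁₆ Ψ) + A₁₆ (A₅₆ Ψ)‖ ≤ 5 * Real.sqrt (2 * ε) := by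
  let a : unitary (H →L[ℂ] H) := ⟨A₁₂, h₁₂.mem_unitary_of_mul_self hi₁₂⟩
  let b : unitary (H →L[ℂ] H) := ⟨A₃₄, h₃₄.mem_unitary_of_mul_self hi₃₄⟩
  let c : unitary (H →L[ℂ] H) := ⟨A₅₆, h₅₆.mem_unitary_of_mul_self hi₅₆⟩
  let d : unitary (H →L[ℂ] H) := ⟨A₄₅, h₄₅.mem_unitary_of_mul_self hi₄₅⟩
  let e : unitary (H →L[ℂ] H) := ⟨A₁₆, h₁₆.mem_unitary_of_mul_self hi₁₆⟩
  let f : unitary (H →L[ℂ] H) := ⟨A₂₃, h₂₃.mem_unitary_of_mul_self hi₂₃⟩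
  -- The sign on `A₂₃` makes all column products `1`, so that column permutations of the table
  -- satisfy the same hypotheses.
  have h : IsApproxMagicRectangle Ψ √(2 * ε) a b c d e (-f) :=
    { mul_self_a := Subtype.ext hi₁₂, mul_self_b := Subtype.ext hi₃₄
      mul_self_c := Subtype.ext hi₅₆, mul_self_d := Subtype.ext hi₄₅
      mul_self_e := Subtype.ext hi₁₆, mul_self_f := (neg_mul_neg f f).trans (Subtype.ext hi₂₃)
      commute_ab := Subtype.ext c₁, commute_ac := Subtype.ext c₂, commute_bc := Subtype.ext c₃
      commute_de := Subtype.ext c₄, commute_df := (show Commute d f from Subtype.ext c₅).neg_right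
      commute_ef := (show Commute e f from Subtype.ext c₆).neg_right
      dist_row₁ := Unitary.dist_smul_self_le_sqrt _ hΨ e₁
      dist_row₂ :=
        Unitary.dist_smul_self_le_sqrt _ hΨ (by simpa [a, d, e, f, Unitary.coe_neg] using e₂)
      dist_col₁ := Unitary.dist_smul_self_le_sqrt _ hΨ e₃
      dist_col₂ := Unitary.dist_smul_self_le_sqrt _ hΨ e₄
      dist_col₃ := Unitary.dist_smul_self_le_sqrt _ hΨ (by simpa [c, f, Unitary.coe_neg] using e₅) }
  refine ⟨?_, ?_, ?_, ?_, ?_, ?_⟩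
  · exact (Unitary.dist_mul_smul_neg_mul_smul a e Ψ).symm.trans_le h.dist_mul_smul_neg_mul_smul_le
  · simpa only [Unitary.dist_mul_smul_neg_mul_smul, Unitary.coe_neg, neg_apply, map_neg,
      ← neg_add, norm_neg] using h.swap₂₃.dist_mul_smul_neg_mul_smul_le
  · rw [add_comm]
    simpa only [Unitary.dist_mul_smul_neg_mul_smul, Unitary.coe_neg, neg_apply, map_neg,
      ← neg_add, norm_neg] using h.swap₁₂.swap₂₃.dist_mul_smul_neg_mul_smul_le
  · exact (Unitary.dist_mul_smul_neg_mul_smul b d Ψ).symm.trans_le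
      h.swap₁₂.dist_mul_smul_neg_mul_smul_le
  · rw [add_comm]
    exact (Unitary.dist_mul_smul_neg_mul_smul c d Ψ).symm.trans_le
      h.swap₂₃.swap₁₂.dist_mul_smul_neg_mul_smul_le
  · exact (Unitary.dist_mul_smul_neg_mul_smul c e Ψ).symm.trans_le
      h.swap₁₂.swap₂₃.swap₁₂.dist_mul_smul_neg_mul_smul_le

/-- **Approximate anti-commutativity.** If the unit state `Ψ` satisfies the ideal
expectations within error `ε`, then for every adjacent pair of parity operators
`(A_r, A_s)`, `‖A_r (A_s Ψ) + A_s (A_r Ψ)‖ ≤ 5 √(2 ε)`. -/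
theorem approximate_anticommutativity
    {H : Type*} [NormedAddCommGroup H] [InnerProductSpace ℂ H] [CompleteSpace H]
    (A₁₂ A₃₄ A₅₆ A₄₅ A₁₆ A₂₃ : H →L[ℂ] H)
    (h₁₂ : IsSelfAdjoint A₁₂) (h₃₄ : IsSelfAdjoint A₃₄) (h₅₆ : IsSelfAdjoint A₅₆)
    (h₄₅ : IsSelfAdjoint A₄₅) (h₁₆ : IsSelfAdjoint A₁₆) (h₂₃ : IsSelfAdjoint A₂₃)
    (hi₁₂ : A₁₂ ∘L A₁₂ = 1) (hi₃₄ : A₃₄ ∘L A₃₄ = 1) (hi₅₆ : A₅₆ ∘L A₅₆ = 1)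
    (hi₄₅ : A₄₅ ∘L A₄₅ = 1) (hi₁₆ : A₁₆ ∘L A₁₆ = 1) (hi₂₃ : A₂₃ ∘L A₂₃ = 1)
    (c₁ : A₁₂ ∘L A₃₄ = A₃₄ ∘L A₁₂) (c₂ : A₁₂ ∘L A₅₆ = A₅₆ ∘L A₁₂)
    (c₃ : A₃₄ ∘L A₅₆ = A₅₆ ∘L A₃₄) (c₄ : A₄₅ ∘L A₁₆ = A₁₆ ∘L A₄₅)
    (c₅ : A₄₅ ∘L A₂₃ = A₂₃ ∘L A₄₅) (c₆ : A₁₆ ∘L A₂₃ = A₂₃ ∘L A₁₆)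
    (c₇ : A₁₂ ∘L A₄₅ = A₄₅ ∘L A₁₂) (c₈ : A₃₄ ∘L A₁₆ = A₁₆ ∘L A₃₄)
    (c₉ : A₅₆ ∘L A₂₃ = A₂₃ ∘L A₅₆)
    (Ψ : H) (hΨ : ‖Ψ‖ = 1) (ε : ℝ) (hε : 0 ≤ ε)
    -- ideal expectations within error ε
    (e₁ : 1 - ε ≤ RCLike.re ⟪Ψ, A₁₂ (A₃₄ (A₅₆ Ψ))⟫_ℂ)
    (e₂ : 1 - ε ≤ RCLike.re ⟪Ψ, A₄₅ (A₁₆ (A₂₃ Ψ))⟫_ℂ)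
    (e₃ : 1 - ε ≤ RCLike.re ⟪Ψ, A₁₂ (A₄₅ Ψ)⟫_ℂ)
    (e₄ : 1 - ε ≤ RCLike.re ⟪Ψ, A₃₄ (A₁₆ Ψ)⟫_ℂ)
    (e₅ : 1 - ε ≤ -RCLike.re ⟪Ψ, A₅₆ (A₂₃ Ψ)⟫_ℂ) :
    ‖A₁₂ (A₁₆ Ψ) + A₁₆ (A₁₂ Ψ)‖ ≤ 5 * Real.sqrt (2 * ε) ∧
    ‖A₁₂ (A₂₃ Ψ) + A₂₃ (A₁₂ Ψ)‖ ≤ 5 * Real.sqrt (2 * ε) ∧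
    ‖A₂₃ (A₃₄ Ψ) + A₃₄ (A₂₃ Ψ)‖ ≤ 5 * Real.sqrt (2 * ε) ∧
    ‖A₃₄ (A₄₅ Ψ) + A₄₅ (A₃₄ Ψ)‖ ≤ 5 * Real.sqrt (2 * ε) ∧
    ‖A₄₅ (A₅₆ Ψ) + A₅₆ (A₄₅ Ψ)‖ ≤ 5 * Real.sqrt (2 * ε) ∧
    ‖A₅₆ (A₁₆ Ψ) + A₁₆ (A₅₆ Ψ)‖ ≤ 5 * Real.sqrt (2 * ε) :=
  approximate_anticommutativity_general A₁₂ A₃₄ A₅₆ A₄₅ A₁₆ A₂₃ h₁₂ h₃₄ h₅₆ h₄₅ h₁₆ h₂₃ hi₁₂ hi₃₄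
    hi₅₆ hi₄₅ hi₁₆ hi₂₃ c₁ c₂ c₃ c₄ c₅ c₆ Ψ hΨ ε e₁ e₂ e₃ e₄ e₅
end

section
/- Jordan's Lemma: let H be a finite-dimensional complex inner product space and let A₁, A₂ : H →ₗ[ℂ] H be self-adjoint linear operators with A₁ ∘ A₁ = id and A₂ ∘ A₂ = id. Then there exists a finite family of subspaces (V_l) of H that are pairwise orthogonal, whose supremum is all of H, such that each V_l has dimension at most 2 and each V_l is invariant under both A₁ and A₂ (i.e. A₁ maps V_l into V_l and A₂ maps V_l into V_l). -/
open scoped InnerProductSpace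
open Module

universe u

theorem jordan_aux : ∀ (n : ℕ) (H : Type u) [NormedAddCommGroup H]
    [InnerProductSpace ℂ H] [FiniteDimensional ℂ H], finrank ℂ H ≤ n →
    ∀ (A₁ A₂ : H →ₗ[ℂ] H),
    LinearMap.IsSymmetric A₁ → LinearMap.IsSymmetric A₂ →
    A₁ ∘ₗ A₁ = LinearMap.id → A₂ ∘ₗ A₂ = LinearMap.id →
    ∃ (n : ℕ) (V : Fin n → Submodule ℂ H),
      (∀ i j, i ≠ j → ∀ x ∈ V i, ∀ y ∈ V j, ⟪x, y⟫_ℂ = 0) ∧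
      (⨆ i, V i) = ⊤ ∧
      (∀ i, Module.finrank ℂ (V i) ≤ 2) ∧
      (∀ i, ∀ x ∈ V i, A₁ x ∈ V i) ∧
      (∀ i, ∀ x ∈ V i, A₂ x ∈ V i) := by
  intro n
  induction n with
  | zero =>
    intro H _ _ _ hrank A₁ A₂ _ _ _ _
    refine ⟨0, fun i => ⊥, by simp, ?_, by simp, by simp, by simp⟩
    have : finrank ℂ H = 0 := Nat.le_zero.mp hrank
    have : Subsingleton H := finrank_zero_iff.mp this
    exact Subsingleton.elim _ _
  | succ n ih =>
    intro H _ _ _ hrank A₁ A₂ h₁ h₂ hi₁ hi₂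
    by_cases hH : Subsingleton H
    · refine ⟨0, fun i => ⊥, by simp, Subsingleton.elim _ _, by simp, by simp, by simp⟩
    have : Nontrivial H := not_subsingleton_iff_nontrivial.mp hH
    -- eigenvector of A₁ + A₂
    obtain ⟨μ, hμ⟩ := Module.End.exists_eigenvalue ((A₁ + A₂ : H →ₗ[ℂ] H) : Module.End ℂ H)
    obtain ⟨v, hv⟩ := hμ.exists_hasEigenvector
    have hv0 : v ≠ 0 := hv.2
    have hveq : A₁ v + A₂ v = μ • v := by
      have := hv.apply_eq_smul
      simpa using this
    set W : Submodule ℂ H := Submodule.span ℂ {v, A₁ v} with hW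
    have hvW : v ∈ W := Submodule.subset_span (by simp)
    have hA1vW : A₁ v ∈ W := Submodule.subset_span (by simp)
    have hA2vW : A₂ v ∈ W := by
      have : A₂ v = μ • v - A₁ v := by
        rw [← hveq]; abel
      rw [this]
      exact W.sub_mem (W.smul_mem _ hvW) hA1vW
    have hinv2 : ∀ x, A₂ (A₂ x) = x := fun x => by
      simpa using LinearMap.congr_fun hi₂ x
    have hinv1 : ∀ x, A₁ (A₁ x) = x := fun x => by
      simpa using LinearMap.congr_fun hi₁ x
    have hWA₁ : ∀ x ∈ W, A₁ x ∈ W := by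
      intro x hx
      have : W ≤ W.comap A₁ := by
        rw [hW, Submodule.span_le]
        rintro y (rfl | rfl)
        · exact hA1vW
        · simpa [hinv1] using hvW
      exact this hx
    have hWA₂ : ∀ x ∈ W, A₂ x ∈ W := by
      intro x hx
      have : W ≤ W.comap A₂ := by
        rw [hW, Submodule.span_le]
        rintro y (rfl | rfl)
        · exact hA2vW
        · have : A₂ (A₁ v) = μ • A₂ v - v := by
            have := congrArg (A₂ ·) hveq
            simp only [map_add, map_smul, hinv2] at this
            have h' : A₂ (A₁ v) + v = μ • A₂ v := by simpa using this
            linear_combination (norm := module) h'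
          show A₂ (A₁ v) ∈ W
          rw [this]
          exact W.sub_mem (W.smul_mem _ hA2vW) hvW
      exact this hx
    have hWA₁' : Wᗮ ≤ Wᗮ.comap A₁ := by
      intro x hx
      simp only [Submodule.mem_comap]
      exact h₁.orthogonalComplement_mem_invtSubmodule (fun y hy => hWA₁ y hy) hx
    have hWA₂' : Wᗮ ≤ Wᗮ.comap A₂ := by
      intro x hx
      exact h₂.orthogonalComplement_mem_invtSubmodule (fun y hy => hWA₂ y hy) hx
    -- restrictions
    set B₁ : Wᗮ →ₗ[ℂ] Wᗮ := A₁.restrict (fun x hx => hWA₁' hx) with hB₁def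
    set B₂ : Wᗮ →ₗ[ℂ] Wᗮ := A₂.restrict (fun x hx => hWA₂' hx) with hB₂def
    have hB₁sym : LinearMap.IsSymmetric B₁ := by
      intro x y
      rw [Submodule.coe_inner, Submodule.coe_inner]
      exact h₁ (x : H) (y : H)
    have hB₂sym : LinearMap.IsSymmetric B₂ := by
      intro x y
      rw [Submodule.coe_inner, Submodule.coe_inner]
      exact h₂ (x : H) (y : H)
    have hB₁inv : B₁ ∘ₗ B₁ = LinearMap.id := by
      rw [hB₁def]; ext x
      simp [LinearMap.restrict_coe_apply, hinv1]
    have hB₂inv : B₂ ∘ₗ B₂ = LinearMap.id := by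
      rw [hB₂def]; ext x
      simp [LinearMap.restrict_coe_apply, hinv2]
    -- dimension count
    have hW1 : 1 ≤ finrank ℂ W := by
      have : W ≠ ⊥ := by
        intro h
        exact hv0 (by simpa [h] using hvW)
      exact Submodule.one_le_finrank_iff.mpr this
    have hrk : finrank ℂ Wᗮ ≤ n := by
      have h := W.finrank_add_finrank_orthogonal
      omega
    obtain ⟨m, V', hVo, hVt, hVd, hV1, hV2⟩ := ih Wᗮ hrk B₁ B₂ hB₁sym hB₂sym hB₁inv hB₂inv
    refine ⟨m + 1, Fin.cons W (fun j => (V' j).map Wᗮ.subtype), ?_, ?_, ?_, ?_, ?_⟩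
    · intro i j hij x hx y hy
      induction i using Fin.cases with
      | zero =>
        induction j using Fin.cases with
        | zero => exact absurd rfl hij
        | succ j =>
          simp only [Fin.cons_succ, Submodule.mem_map] at hy
          obtain ⟨z, hz, rfl⟩ := hy
          exact z.2 x hx
      | succ i =>
        induction j using Fin.cases with
        | zero =>
          simp only [Fin.cons_succ, Submodule.mem_map] at hx
          obtain ⟨z, hz, rfl⟩ := hx
          exact inner_eq_zero_symm.mpr (z.2 y hy)
        | succ j =>
          simp only [Fin.cons_succ, Submodule.mem_map] at hx hy
          obtain ⟨z, hz, rfl⟩ := hx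
          obtain ⟨w, hw, rfl⟩ := hy
          have hij' : i ≠ j := fun h => hij (by rw [h])
          have := hVo i j hij' z hz w hw
          simpa [Submodule.coe_inner] using this
    · rw [eq_top_iff, ← W.sup_orthogonal_of_hasOrthogonalProjection]
      refine sup_le ?_ ?_
      · exact le_iSup_of_le 0 (by simp)
      · have heq : Wᗮ = Submodule.map Wᗮ.subtype (⨆ j, V' j) := by
          rw [hVt, Submodule.map_subtype_top]
        calc Wᗮ = Submodule.map Wᗮ.subtype (⨆ j, V' j) := heq
          _ = ⨆ j, Submodule.map Wᗮ.subtype (V' j) := Submodule.map_iSup _ _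
          _ ≤ _ := iSup_le fun j => le_iSup_of_le j.succ (by simp)
    · intro i
      induction i using Fin.cases with
      | zero =>
        have hset : ({v, A₁ v} : Set H) = Set.range ![v, A₁ v] := by
          ext x
          constructor
          · rintro (rfl | rfl)
            exacts [⟨0, rfl⟩, ⟨1, rfl⟩]
          · rintro ⟨i, rfl⟩
            fin_cases i
            · exact Or.inl rfl
            · exact Or.inr rfl
        have h2 := finrank_range_le_card (R := ℂ) ![v, A₁ v]
        rw [Set.finrank, Fintype.card_fin] at h2
        show finrank ℂ W ≤ 2
        rw [hW, hset]
        exact h2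
      | succ j =>
        show finrank ℂ ((V' j).map Wᗮ.subtype) ≤ 2
        rw [Submodule.finrank_map_subtype_eq]
        exact hVd j
    · intro i x hx
      induction i using Fin.cases with
      | zero => exact hWA₁ x hx
      | succ j =>
        simp only [Fin.cons_succ, Submodule.mem_map] at hx ⊢
        obtain ⟨z, hz, rfl⟩ := hx
        exact ⟨B₁ z, hV1 j z hz, rfl⟩
    · intro i x hx
      induction i using Fin.cases with
      | zero => exact hWA₂ x hx
      | succ j =>
        simp only [Fin.cons_succ, Submodule.mem_map] at hx ⊢
        obtain ⟨z, hz, rfl⟩ := hx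
        exact ⟨B₂ z, hV2 j z hz, rfl⟩

/-- **Jordan's Lemma.** If `A₁` and `A₂` are Hermitian involutions on a finite-dimensional
complex inner product space `H`, then `H` decomposes as an orthogonal direct sum of subspaces
of dimension at most 2, each invariant under both `A₁` and `A₂`. -/
theorem jordan_lemma
    {H : Type*} [NormedAddCommGroup H] [InnerProductSpace ℂ H] [FiniteDimensional ℂ H]
    (A₁ A₂ : H →ₗ[ℂ] H)
    (h₁ : LinearMap.IsSymmetric A₁) (h₂ : LinearMap.IsSymmetric A₂)
    (hi₁ : A₁ ∘ₗ A₁ = LinearMap.id) (hi₂ : A₂ ∘ₗ A₂ = LinearMap.id) :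
    ∃ (n : ℕ) (V : Fin n → Submodule ℂ H),
      (∀ i j, i ≠ j → ∀ x ∈ V i, ∀ y ∈ V j, ⟪x, y⟫_ℂ = 0) ∧
      (⨆ i, V i) = ⊤ ∧
      (∀ i, Module.finrank ℂ (V i) ≤ 2) ∧
      (∀ i, ∀ x ∈ V i, A₁ x ∈ V i) ∧
      (∀ i, ∀ x ∈ V i, A₂ x ∈ V i) := by
  exact jordan_aux (finrank ℂ H) H le_rfl A₁ A₂ h₁ h₂ hi₁ hi₂
end

section
/- Corollary to Jordan's Lemma: let H be a finite-dimensional complex inner product space and let A₁, A₂, B₁, B₂ : H →ₗ[ℂ] H be self-adjoint linear operators, each squaring to the identity, such that A_k ∘ B_{k'} = B_{k'} ∘ A_k for all k, k' ∈ {1, 2}. Then there exists a finite family of subspaces (V_l) of H that are pairwise orthogonal, whose supremum is all of H, such that each V_l has dimension at most 4 and each V_l is invariant under all four operators A₁, A₂, B₁, B₂. -/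
open scoped InnerProductSpace

open Module Submodule in
lemma jlc_exists_invariant {H : Type*} [NormedAddCommGroup H] [InnerProductSpace ℂ H]
    [FiniteDimensional ℂ H] [Nontrivial H]
    (A₁ A₂ B₁ B₂ : H →ₗ[ℂ] H)
    (hiA₁ : A₁ ∘ₗ A₁ = LinearMap.id) (hiA₂ : A₂ ∘ₗ A₂ = LinearMap.id)
    (hiB₁ : B₁ ∘ₗ B₁ = LinearMap.id) (hiB₂ : B₂ ∘ₗ B₂ = LinearMap.id)
    (hc₁₁ : A₁ ∘ₗ B₁ = B₁ ∘ₗ A₁) (hc₁₂ : A₁ ∘ₗ B₂ = B₂ ∘ₗ A₁)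
    (hc₂₁ : A₂ ∘ₗ B₁ = B₁ ∘ₗ A₂) (hc₂₂ : A₂ ∘ₗ B₂ = B₂ ∘ₗ A₂) :
    ∃ W : Submodule ℂ H, W ≠ ⊥ ∧ Module.finrank ℂ W ≤ 4 ∧
      (∀ x ∈ W, A₁ x ∈ W) ∧ (∀ x ∈ W, A₂ x ∈ W) ∧
      (∀ x ∈ W, B₁ x ∈ W) ∧ (∀ x ∈ W, B₂ x ∈ W) := by
  -- pointwise versions
  have a₁ : ∀ z, A₁ (A₁ z) = z := fun z => by
    simpa using LinearMap.congr_fun hiA₁ z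
  have a₂ : ∀ z, A₂ (A₂ z) = z := fun z => by
    simpa using LinearMap.congr_fun hiA₂ z
  have b₁ : ∀ z, B₁ (B₁ z) = z := fun z => by
    simpa using LinearMap.congr_fun hiB₁ z
  have b₂ : ∀ z, B₂ (B₂ z) = z := fun z => by
    simpa using LinearMap.congr_fun hiB₂ z
  have c₁₁ : ∀ z, A₁ (B₁ z) = B₁ (A₁ z) := fun z => by
    simpa using LinearMap.congr_fun hc₁₁ z
  have c₁₂ : ∀ z, A₁ (B₂ z) = B₂ (A₁ z) := fun z => by
    simpa using LinearMap.congr_fun hc₁₂ z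
  have c₂₁ : ∀ z, A₂ (B₁ z) = B₁ (A₂ z) := fun z => by
    simpa using LinearMap.congr_fun hc₂₁ z
  have c₂₂ : ∀ z, A₂ (B₂ z) = B₂ (A₂ z) := fun z => by
    simpa using LinearMap.congr_fun hc₂₂ z
  set U : Module.End ℂ H := A₁ ∘ₗ A₂ with hU
  set V : Module.End ℂ H := B₁ ∘ₗ B₂ with hV
  obtain ⟨μ, hμ⟩ := Module.End.exists_eigenvalue U
  have hE : Nontrivial (U.eigenspace μ) :=
    Submodule.nontrivial_iff_ne_bot.2 hμ
  have hVE : ∀ z ∈ U.eigenspace μ, V z ∈ U.eigenspace μ := by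
    intro z hz
    rw [Module.End.mem_eigenspace_iff] at hz ⊢
    have : U (V z) = V (U z) := by
      show A₁ (A₂ (B₁ (B₂ z))) = B₁ (B₂ (A₁ (A₂ z)))
      rw [c₂₁, c₁₁, c₂₂, c₁₂]
    rw [this, hz, map_smul]
  obtain ⟨τ, hτ⟩ := Module.End.exists_eigenvalue (V.restrict hVE)
  obtain ⟨y, hy⟩ := hτ.exists_hasEigenvector
  set x : H := (y : H) with hxdef
  have hx0 : x ≠ 0 := fun h => hy.2 (Subtype.ext h)
  have hUx : A₁ (A₂ x) = μ • x := Module.End.mem_eigenspace_iff.1 y.2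
  have hVx : B₁ (B₂ x) = τ • x := by
    have := Module.End.mem_eigenspace_iff.1 hy.1
    have := congrArg (Subtype.val) this
    simpa [LinearMap.restrict_coe_apply, hV, hxdef] using this
  -- μ ≠ 0 and inverse eigen-relations
  have hμinv : x = μ • A₂ (A₁ x) := by
    have : A₂ (A₁ (A₁ (A₂ x))) = A₂ (A₁ (μ • x)) := by rw [hUx]
    simpa [a₁, a₂, map_smul] using this
  have hμ0 : μ ≠ 0 := by
    intro h; apply hx0; rw [hμinv, h, zero_smul]
  have hτinv : x = τ • B₂ (B₁ x) := by
    have : B₂ (B₁ (B₁ (B₂ x))) = B₂ (B₁ (τ • x)) := by rw [hVx]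
    simpa [b₁, b₂, map_smul] using this
  have hτ0 : τ ≠ 0 := by
    intro h; apply hx0; rw [hτinv, h, zero_smul]
  have hA₂A₁ : A₂ (A₁ x) = μ⁻¹ • x := by
    symm; rw [inv_smul_eq_iff₀ hμ0]; exact hμinv
  have hB₂B₁ : B₂ (B₁ x) = τ⁻¹ • x := by
    symm; rw [inv_smul_eq_iff₀ hτ0]; exact hτinv
  have hA₂x : A₂ x = μ • A₁ x := by
    have : A₁ (A₁ (A₂ x)) = A₁ (μ • x) := by rw [hUx]
    simpa [a₁, map_smul] using this
  have hB₂x : B₂ x = τ • B₁ x := by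
    have : B₁ (B₁ (B₂ x)) = B₁ (τ • x) := by rw [hVx]
    simpa [b₁, map_smul] using this
  set f : Fin 4 → H := ![x, A₁ x, B₁ x, A₁ (B₁ x)] with hf
  set W : Submodule ℂ H := span ℂ (Set.range f) with hW
  have m0 : x ∈ W := subset_span ⟨0, rfl⟩
  have m1 : A₁ x ∈ W := subset_span ⟨1, rfl⟩
  have m2 : B₁ x ∈ W := subset_span ⟨2, rfl⟩
  have m3 : A₁ (B₁ x) ∈ W := subset_span ⟨3, rfl⟩
  have key : ∀ (T : H →ₗ[ℂ] H), T x ∈ W → T (A₁ x) ∈ W → T (B₁ x) ∈ W →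
      T (A₁ (B₁ x)) ∈ W → ∀ z ∈ W, T z ∈ W := by
    intro T h0 h1 h2 h3 z hz
    induction hz using Submodule.span_induction with
    | mem w hw =>
      obtain ⟨i, rfl⟩ := hw
      fin_cases i <;>
        simpa only [hf, Matrix.cons_val_zero, Matrix.cons_val_one, Matrix.head_cons,
          Matrix.cons_val_two, Matrix.tail_cons, Matrix.cons_val_three] using
          (by assumption : _)
    | zero => simpa using Submodule.zero_mem W
    | add u v _ _ hu hv => simpa using Submodule.add_mem W hu hv
    | smul c u _ hu => simpa using Submodule.smul_mem W c hu
  refine ⟨W, ?_, ?_, ?_, ?_, ?_, ?_⟩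
  · intro h
    apply hx0
    rw [h] at m0
    simpa using m0
  · exact finrank_range_le_card (R := ℂ) f
  · refine key A₁ m1 ?_ m3 ?_
    · rw [a₁]; exact m0
    · rw [a₁]; exact m2
  · refine key A₂ ?_ ?_ ?_ ?_
    · rw [hA₂x]; exact Submodule.smul_mem W _ m1
    · rw [hA₂A₁]; exact Submodule.smul_mem W _ m0
    · rw [c₂₁, hA₂x, map_smul, ← c₁₁]; exact Submodule.smul_mem W _ m3
    · rw [c₁₁, c₂₁, hA₂A₁, map_smul]; exact Submodule.smul_mem W _ m2
  · refine key B₁ m2 ?_ ?_ ?_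
    · rw [← c₁₁]; exact m3
    · rw [b₁]; exact m0
    · rw [← c₁₁, b₁]; exact m1
  · refine key B₂ ?_ ?_ ?_ ?_
    · rw [hB₂x]; exact Submodule.smul_mem W _ m2
    · rw [← c₁₂, hB₂x, map_smul]; exact Submodule.smul_mem W _ m3
    · rw [hB₂B₁]; exact Submodule.smul_mem W _ m0
    · rw [← c₁₂, hB₂B₁, map_smul]; exact Submodule.smul_mem W _ m1

section
variable {H : Type*} [NormedAddCommGroup H] [InnerProductSpace ℂ H] [FiniteDimensional ℂ H]

lemma jlc_orth_inv {W : Submodule ℂ H} {T : H →ₗ[ℂ] H} (hT : T.IsSymmetric)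
    (h : ∀ x ∈ W, T x ∈ W) : ∀ x ∈ Wᗮ, T x ∈ Wᗮ := by
  intro x hx
  rw [Submodule.mem_orthogonal] at hx ⊢
  intro u hu
  rw [← hT u x]
  exact hx _ (h u hu)

end

lemma jlc_aux (n : ℕ) {H : Type*} [NormedAddCommGroup H] [InnerProductSpace ℂ H]
    [FiniteDimensional ℂ H]
    (A₁ A₂ B₁ B₂ : H →ₗ[ℂ] H)
    (hA₁ : LinearMap.IsSymmetric A₁) (hA₂ : LinearMap.IsSymmetric A₂)
    (hB₁ : LinearMap.IsSymmetric B₁) (hB₂ : LinearMap.IsSymmetric B₂)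
    (hiA₁ : A₁ ∘ₗ A₁ = LinearMap.id) (hiA₂ : A₂ ∘ₗ A₂ = LinearMap.id)
    (hiB₁ : B₁ ∘ₗ B₁ = LinearMap.id) (hiB₂ : B₂ ∘ₗ B₂ = LinearMap.id)
    (hc₁₁ : A₁ ∘ₗ B₁ = B₁ ∘ₗ A₁) (hc₁₂ : A₁ ∘ₗ B₂ = B₂ ∘ₗ A₁)
    (hc₂₁ : A₂ ∘ₗ B₁ = B₁ ∘ₗ A₂) (hc₂₂ : A₂ ∘ₗ B₂ = B₂ ∘ₗ A₂)
    (hn : Module.finrank ℂ H ≤ n) :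
    ∃ (m : ℕ) (V : Fin m → Submodule ℂ H),
      (∀ i j, i ≠ j → ∀ x ∈ V i, ∀ y ∈ V j, ⟪x, y⟫_ℂ = 0) ∧
      (⨆ i, V i) = ⊤ ∧
      (∀ i, Module.finrank ℂ (V i) ≤ 4) ∧
      (∀ i, ∀ x ∈ V i, A₁ x ∈ V i) ∧
      (∀ i, ∀ x ∈ V i, A₂ x ∈ V i) ∧
      (∀ i, ∀ x ∈ V i, B₁ x ∈ V i) ∧
      (∀ i, ∀ x ∈ V i, B₂ x ∈ V i) := by
  induction n generalizing H with
  | zero =>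
    have : Module.finrank ℂ H = 0 := Nat.le_zero.1 hn
    have hsub : Subsingleton H := (Module.finrank_zero_iff (R := ℂ)).1 this
    refine ⟨0, Fin.elim0, ?_, ?_, ?_, ?_, ?_, ?_, ?_⟩ <;>
      first
        | exact fun i => i.elim0
        | exact fun i j _ => i.elim0
        | exact Subsingleton.elim _ _
  | succ n ih =>
    rcases subsingleton_or_nontrivial H with hsub | hnt
    · refine ⟨0, Fin.elim0, ?_, ?_, ?_, ?_, ?_, ?_, ?_⟩ <;>
        first
          | exact fun i => i.elim0
          | exact fun i j _ => i.elim0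
          | exact Subsingleton.elim _ _
    · obtain ⟨W, hWbot, hWrk, hWA₁, hWA₂, hWB₁, hWB₂⟩ :=
        jlc_exists_invariant A₁ A₂ B₁ B₂ hiA₁ hiA₂ hiB₁ hiB₂ hc₁₁ hc₁₂ hc₂₁ hc₂₂
      -- orthogonal complement is invariant
      have hOA₁ := jlc_orth_inv hA₁ hWA₁
      have hOA₂ := jlc_orth_inv hA₂ hWA₂
      have hOB₁ := jlc_orth_inv hB₁ hWB₁
      have hOB₂ := jlc_orth_inv hB₂ hWB₂
      set A₁' := A₁.restrict hOA₁
      set A₂' := A₂.restrict hOA₂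
      set B₁' := B₁.restrict hOB₁
      set B₂' := B₂.restrict hOB₂
      have symm_res : ∀ (T : H →ₗ[ℂ] H) (hT : T.IsSymmetric)
          (h : ∀ x ∈ Wᗮ, T x ∈ Wᗮ), (T.restrict h).IsSymmetric := by
        intro T hT h x y
        simp only [Submodule.coe_inner, LinearMap.restrict_coe_apply]
        exact hT _ _
      have inv_res : ∀ (T : H →ₗ[ℂ] H) (hTi : T ∘ₗ T = LinearMap.id)
          (h : ∀ x ∈ Wᗮ, T x ∈ Wᗮ), (T.restrict h) ∘ₗ (T.restrict h) = LinearMap.id := by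
        intro T hTi h
        ext x
        simp only [LinearMap.comp_apply, LinearMap.restrict_coe_apply, LinearMap.id_coe, id_eq]
        simpa using LinearMap.congr_fun hTi (x : H)
      have comm_res : ∀ (S T : H →ₗ[ℂ] H) (hST : S ∘ₗ T = T ∘ₗ S)
          (hS : ∀ x ∈ Wᗮ, S x ∈ Wᗮ) (hTm : ∀ x ∈ Wᗮ, T x ∈ Wᗮ),
          (S.restrict hS) ∘ₗ (T.restrict hTm) = (T.restrict hTm) ∘ₗ (S.restrict hS) := by
        intro S T hST hS hTm
        ext x
        simp only [LinearMap.comp_apply, LinearMap.restrict_coe_apply]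
        simpa using LinearMap.congr_fun hST (x : H)
      have hrk : Module.finrank ℂ (Wᗮ : Submodule ℂ H) ≤ n := by
        have h1 := Submodule.finrank_add_finrank_orthogonal (K := W)
        have h2 : 0 < Module.finrank ℂ W := by
          haveI := Submodule.nontrivial_iff_ne_bot.2 hWbot
          exact Module.finrank_pos
        omega
      obtain ⟨m, V', horth, hsup, hrk', hVA₁, hVA₂, hVB₁, hVB₂⟩ :=
        ih A₁' A₂' B₁' B₂'
          (symm_res A₁ hA₁ hOA₁) (symm_res A₂ hA₂ hOA₂)
          (symm_res B₁ hB₁ hOB₁) (symm_res B₂ hB₂ hOB₂)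
          (inv_res A₁ hiA₁ hOA₁) (inv_res A₂ hiA₂ hOA₂)
          (inv_res B₁ hiB₁ hOB₁) (inv_res B₂ hiB₂ hOB₂)
          (comm_res A₁ B₁ hc₁₁ hOA₁ hOB₁) (comm_res A₁ B₂ hc₁₂ hOA₁ hOB₂)
          (comm_res A₂ B₁ hc₂₁ hOA₂ hOB₁) (comm_res A₂ B₂ hc₂₂ hOA₂ hOB₂)
          hrk
      refine ⟨m + 1, Fin.cons W (fun i => (V' i).map Wᗮ.subtype), ?_, ?_, ?_, ?_, ?_, ?_, ?_⟩
      · intro i j hij x hx y hy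
        rcases Fin.eq_zero_or_eq_succ i with rfl | ⟨i', rfl⟩ <;>
          rcases Fin.eq_zero_or_eq_succ j with rfl | ⟨j', rfl⟩
        · exact absurd rfl hij
        · simp only [Fin.cons_zero, Fin.cons_succ] at hx hy
          obtain ⟨y', hy', rfl⟩ := hy
          exact ((Submodule.mem_orthogonal _ _).1 y'.2 x hx)
        · simp only [Fin.cons_zero, Fin.cons_succ] at hx hy
          obtain ⟨x', hx', rfl⟩ := hx
          have h0 := (Submodule.mem_orthogonal _ _).1 x'.2 y hy
          simpa [inner_conj_symm] using congrArg (starRingEnd ℂ) h0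
        · simp only [Fin.cons_succ] at hx hy
          obtain ⟨x', hx', rfl⟩ := hx
          obtain ⟨y', hy', rfl⟩ := hy
          have hij' : i' ≠ j' := fun h => hij (by rw [h])
          have := horth i' j' hij' x' hx' y' hy'
          simpa [Submodule.coe_inner] using this
      · refine eq_top_iff.2 (le_trans
          (le_of_eq (Submodule.sup_orthogonal_of_hasOrthogonalProjection (K := W)).symm) (sup_le ?_ ?_))
        · exact le_iSup_of_le 0 le_rfl
        · have hW' : Wᗮ = ⨆ i, (V' i).map Wᗮ.subtype := by
            rw [← Submodule.map_iSup, hsup, Submodule.map_top, Submodule.range_subtype]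
          exact hW'.le.trans (iSup_le fun i => le_iSup_of_le i.succ le_rfl)
      · intro i
        rcases Fin.eq_zero_or_eq_succ i with rfl | ⟨i', rfl⟩
        · exact hWrk
        · rw [Fin.cons_succ, Submodule.finrank_map_subtype_eq]
          exact hrk' i'
      all_goals {
        intro i x hx
        rcases Fin.eq_zero_or_eq_succ i with rfl | ⟨i', rfl⟩
        · simp only [Fin.cons_zero] at hx ⊢
          first
            | exact hWA₁ x hx | exact hWA₂ x hx | exact hWB₁ x hx | exact hWB₂ x hx
        · simp only [Fin.cons_succ] at hx ⊢
          obtain ⟨x', hx', rfl⟩ := hx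
          first
            | exact Submodule.mem_map.2 ⟨A₁' x', hVA₁ i' x' hx', rfl⟩
            | exact Submodule.mem_map.2 ⟨A₂' x', hVA₂ i' x' hx', rfl⟩
            | exact Submodule.mem_map.2 ⟨B₁' x', hVB₁ i' x' hx', rfl⟩
            | exact Submodule.mem_map.2 ⟨B₂' x', hVB₂ i' x' hx', rfl⟩
      }


/-- **Corollary to Jordan's Lemma.** If `A₁, A₂, B₁, B₂` are Hermitian involutions on a
finite-dimensional complex inner product space `H`, with each `A_k` commuting with each
`B_k'`, then `H` decomposes as an orthogonal direct sum of subspaces of dimension at most 4,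
each invariant under all four operators. -/
theorem jordan_lemma_corollary
    {H : Type*} [NormedAddCommGroup H] [InnerProductSpace ℂ H] [FiniteDimensional ℂ H]
    (A₁ A₂ B₁ B₂ : H →ₗ[ℂ] H)
    (hA₁ : LinearMap.IsSymmetric A₁) (hA₂ : LinearMap.IsSymmetric A₂)
    (hB₁ : LinearMap.IsSymmetric B₁) (hB₂ : LinearMap.IsSymmetric B₂)
    (hiA₁ : A₁ ∘ₗ A₁ = LinearMap.id) (hiA₂ : A₂ ∘ₗ A₂ = LinearMap.id)
    (hiB₁ : B₁ ∘ₗ B₁ = LinearMap.id) (hiB₂ : B₂ ∘ₗ B₂ = LinearMap.id)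
    (hc₁₁ : A₁ ∘ₗ B₁ = B₁ ∘ₗ A₁) (hc₁₂ : A₁ ∘ₗ B₂ = B₂ ∘ₗ A₁)
    (hc₂₁ : A₂ ∘ₗ B₁ = B₁ ∘ₗ A₂) (hc₂₂ : A₂ ∘ₗ B₂ = B₂ ∘ₗ A₂) :
    ∃ (n : ℕ) (V : Fin n → Submodule ℂ H),
      (∀ i j, i ≠ j → ∀ x ∈ V i, ∀ y ∈ V j, ⟪x, y⟫_ℂ = 0) ∧
      (⨆ i, V i) = ⊤ ∧
      (∀ i, Module.finrank ℂ (V i) ≤ 4) ∧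
      (∀ i, ∀ x ∈ V i, A₁ x ∈ V i) ∧
      (∀ i, ∀ x ∈ V i, A₂ x ∈ V i) ∧
      (∀ i, ∀ x ∈ V i, B₁ x ∈ V i) ∧
      (∀ i, ∀ x ∈ V i, B₂ x ∈ V i) := by
  exact jlc_aux (Module.finrank ℂ H) A₁ A₂ B₁ B₂ hA₁ hA₂ hB₁ hB₂
    hiA₁ hiA₂ hiB₁ hiB₂ hc₁₁ hc₁₂ hc₂₁ hc₂₂ le_rfl
end

section
/- Quantum bound for the contextuality witness: let H be a complex Hilbert space, let A₁₂, A₃₄, A₅₆, A₄₅, A₁₆, A₂₃ : H →L[ℂ] H be self-adjoint operators each squaring to the identity, and let Ψ ∈ H be a unit vector. Then re⟪Ψ, A₁₂(A₃₄(A₅₆ Ψ))⟫ + re⟪Ψ, A₄₅(A₁₆(A₂₃ Ψ))⟫ + re⟪Ψ, A₁₂(A₄₅ Ψ)⟫ + re⟪Ψ, A₃₄(A₁₆ Ψ)⟫ − re⟪Ψ, A₅₆(A₂₃ Ψ)⟫ ≤ 5. -/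
/-!
Each of the five terms is the expectation of a unitary operator, a product of Hermitian
involutions, in a unit vector; by Cauchy–Schwarz its real part lies in `[-1, 1]`.
-/

open scoped InnerProductSpace

lemma IsSelfAdjoint.mem_unitary_of_mul_self_eq_one {R : Type*} [Monoid R] [StarMul R] {a : R}
    (ha : IsSelfAdjoint a) (h : a * a = 1) : a ∈ unitary R :=
  Unitary.mem_iff.mpr ⟨by rw [ha.star_eq, h], by rw [ha.star_eq, h]⟩

lemma abs_re_inner_apply_self_le_of_mem_unitary {𝕜 H : Type*} [RCLike 𝕜] [NormedAddCommGroup H]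
    [InnerProductSpace 𝕜 H] [CompleteSpace H] {u : H →L[𝕜] H} (hu : u ∈ unitary (H →L[𝕜] H))
    (x : H) : |RCLike.re ⟪x, u x⟫_𝕜| ≤ ‖x‖ ^ 2 :=
  calc |RCLike.re ⟪x, u x⟫_𝕜| ≤ ‖⟪x, u x⟫_𝕜‖ := RCLike.abs_re_le_norm _
    _ ≤ ‖x‖ * ‖u x‖ := norm_inner_le_norm x (u x)
    _ = ‖x‖ ^ 2 := by rw [ContinuousLinearMap.norm_map_of_mem_unitary hu, sq]

/-- **Quantum bound for the contextuality witness.** For any Hermitian involutions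
`A₁₂, A₃₄, A₅₆, A₄₅, A₁₆, A₂₃` on a complex Hilbert space and any unit vector `Ψ`, the
expectation of the witness `W = A₁₂A₃₄A₅₆ + A₄₅A₁₆A₂₃ + A₁₂A₄₅ + A₃₄A₁₆ − A₅₆A₂₃` in the
state `Ψ` is at most `5`. -/
theorem quantum_bound_contextuality_witness
    {H : Type*} [NormedAddCommGroup H] [InnerProductSpace ℂ H] [CompleteSpace H]
    (A₁₂ A₃₄ A₅₆ A₄₅ A₁₆ A₂₃ : H →L[ℂ] H)
    (h₁₂ : IsSelfAdjoint A₁₂) (h₃₄ : IsSelfAdjoint A₃₄) (h₅₆ : IsSelfAdjoint A₅₆)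
    (h₄₅ : IsSelfAdjoint A₄₅) (h₁₆ : IsSelfAdjoint A₁₆) (h₂₃ : IsSelfAdjoint A₂₃)
    (hi₁₂ : A₁₂ ∘L A₁₂ = 1) (hi₃₄ : A₃₄ ∘L A₃₄ = 1) (hi₅₆ : A₅₆ ∘L A₅₆ = 1)
    (hi₄₅ : A₄₅ ∘L A₄₅ = 1) (hi₁₆ : A₁₆ ∘L A₁₆ = 1) (hi₂₃ : A₂₃ ∘L A₂₃ = 1)
    (Ψ : H) (hΨ : ‖Ψ‖ = 1) :
    (⟪Ψ, A₁₂ (A₃₄ (A₅₆ Ψ))⟫_ℂ).re + (⟪Ψ, A₄₅ (A₁₆ (A₂₃ Ψ))⟫_ℂ).re +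
      (⟪Ψ, A₁₂ (A₄₅ Ψ)⟫_ℂ).re + (⟪Ψ, A₃₄ (A₁₆ Ψ)⟫_ℂ).re -
      (⟪Ψ, A₅₆ (A₂₃ Ψ)⟫_ℂ).re ≤ 5 := by
  have u₁₂ := h₁₂.mem_unitary_of_mul_self_eq_one hi₁₂
  have u₃₄ := h₃₄.mem_unitary_of_mul_self_eq_one hi₃₄
  have u₅₆ := h₅₆.mem_unitary_of_mul_self_eq_one hi₅₆
  have u₄₅ := h₄₅.mem_unitary_of_mul_self_eq_one hi₄₅
  have u₁₆ := h₁₆.mem_unitary_of_mul_self_eq_one hi₁₆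
  have u₂₃ := h₂₃.mem_unitary_of_mul_self_eq_one hi₂₃
  have expectation_le : ∀ u ∈ unitary (H →L[ℂ] H), |(⟪Ψ, u Ψ⟫_ℂ).re| ≤ 1 := fun u hu => by
    simpa [hΨ] using abs_re_inner_apply_self_le_of_mem_unitary hu Ψ
  have t₁ : |(⟪Ψ, A₁₂ (A₃₄ (A₅₆ Ψ))⟫_ℂ).re| ≤ 1 :=
    expectation_le _ (mul_mem (mul_mem u₁₂ u₃₄) u₅₆)
  have t₂ : |(⟪Ψ, A₄₅ (A₁₆ (A₂₃ Ψ))⟫_ℂ).re| ≤ 1 :=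
    expectation_le _ (mul_mem (mul_mem u₄₅ u₁₆) u₂₃)
  have t₃ : |(⟪Ψ, A₁₂ (A₄₅ Ψ)⟫_ℂ).re| ≤ 1 := expectation_le _ (mul_mem u₁₂ u₄₅)
  have t₄ : |(⟪Ψ, A₃₄ (A₁₆ Ψ)⟫_ℂ).re| ≤ 1 := expectation_le _ (mul_mem u₃₄ u₁₆)
  have t₅ : |(⟪Ψ, A₅₆ (A₂₃ Ψ)⟫_ℂ).re| ≤ 1 := expectation_le _ (mul_mem u₅₆ u₂₃)
  linarith [(abs_le.mp t₁).2, (abs_le.mp t₂).2, (abs_le.mp t₃).2, (abs_le.mp t₄).2,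
    (abs_le.mp t₅).1]
end
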